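/- arXiv:math/0609423 — 5 statements merged into one kernel-verified Lean document; each statement's English description precedes it below -/
import Mathlib

section
/- For every Hurst parameter H ∈ (0,1) with H ≠ 1/2 and every fixed s > 0, the map t ↦ K^H(t,s) is differentiable on (s,∞), and its derivative satisfies ∂K^H/∂t (t,s) = c_H (H − 1/2) (t − s)^{H − 3/2} (s/t)^{1/2 − H} for all t > s. -/
open MeasureTheory Set Filter

/-- The constant `c_H` in the fractional Brownian motion kernel. -/
noncomputable def cH (H : ℝ) : ℝ :=
  Real.sqrt (2 * H * Real.Gamma (3/2 - H) / (Real.Gamma (H + 1/2) * Real.Gamma (2 - 2*H)))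

/-- The fractional Brownian motion kernel `K^H(t,s)`, equal to
`c_H (t-s)^{H-1/2} + c_H (1/2-H) ∫_s^t (u-s)^{H-3/2} (1-(s/u)^{1/2-H}) du` for `0 < s < t`
and `0` otherwise. -/
noncomputable def fbmK (H t s : ℝ) : ℝ :=
  if 0 < s ∧ s < t then
    cH H * (t - s) ^ (H - 1/2) +
      cH H * (1/2 - H) * ∫ u in s..t, (u - s) ^ (H - 3/2) * (1 - (s/u) ^ (1/2 - H))
  else 0

/-- Continuity of the integrand at points `u` with `s < u`. -/
lemma fbm_integrand_continuousAt (H s u : ℝ) (hs : 0 < s) (hu : s < u) :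
    ContinuousAt (fun u => (u - s) ^ (H - 3/2) * (1 - (s/u) ^ (1/2 - H))) u := by
  have hu0 : 0 < u := hs.trans hu
  have h1 : ContinuousAt (fun u : ℝ => (u - s) ^ (H - 3/2)) u :=
    (continuousAt_id.sub continuousAt_const).rpow_const (Or.inl (sub_pos.2 hu).ne')
  have h2 : ContinuousAt (fun u : ℝ => (1 - (s/u) ^ (1/2 - H))) u :=
    continuousAt_const.sub
      ((continuousAt_const.div continuousAt_id hu0.ne').rpow_const
        (Or.inl (div_pos hs hu0).ne'))
  exact h1.mul h2

/-- The integrand is interval integrable on `s..t`. -/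
lemma fbm_integrand_integrable (H : ℝ) (hH : H ∈ Set.Ioo (0:ℝ) 1) (s : ℝ) (hs : 0 < s)
    (t : ℝ) (hts : s < t) :
    IntervalIntegrable (fun u => (u - s) ^ (H - 3/2) * (1 - (s/u) ^ (1/2 - H)))
      volume s t := by
  obtain ⟨hH0, hH1⟩ := hH
  set b : ℝ := 1/2 - H with hb
  have ht0 : 0 < t := hs.trans hts
  have hst : 0 < s / t := div_pos hs ht0
  have hst1 : s / t ≤ 1 := (div_le_one ht0).2 hts.le
  set C : ℝ := |b| * (s/t) ^ (b - 1) / s with hC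
  have hC0 : 0 ≤ C := by
    apply div_nonneg _ hs.le
    exact mul_nonneg (abs_nonneg _) (Real.rpow_pos_of_pos hst _).le
  -- the MVT bound
  have key : ∀ u ∈ Set.Ioc s t, |1 - (s/u) ^ b| ≤ C * (u - s) := by
    intro u hu
    have hu0 : 0 < u := hs.trans hu.1
    have hv0 : 0 < s / u := div_pos hs hu0
    have hvl : s / t ≤ s / u := div_le_div_of_nonneg_left hs.le hu0 hu.2
    have hv1 : s / u ≤ 1 := (div_le_one hu0).2 hu.1.le
    have hmvt : ‖(1:ℝ) ^ b - (s/u) ^ b‖ ≤ (|b| * (s/t) ^ (b-1)) * ‖(1:ℝ) - s/u‖ := by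
      apply (convex_Icc (s/t) 1).norm_image_sub_le_of_norm_hasDerivWithin_le
        (f := fun v : ℝ => v ^ b) (f' := fun v : ℝ => b * v ^ (b - 1))
      · intro v hv
        have hv0 : (0:ℝ) < v := hst.trans_le hv.1
        have := Real.hasDerivAt_rpow_const (x := v) (p := b) (Or.inl hv0.ne')
        exact this.hasDerivWithinAt
      · intro v hv
        have hv0 : (0:ℝ) < v := hst.trans_le hv.1
        rw [Real.norm_eq_abs, abs_mul, abs_of_pos (Real.rpow_pos_of_pos hv0 _)]
        have : v ^ (b - 1) ≤ (s/t) ^ (b - 1) :=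
          Real.rpow_le_rpow_of_nonpos hst hv.1 (by rw [hb]; linarith)
        exact mul_le_mul_of_nonneg_left this (abs_nonneg _)
      · exact ⟨hvl, hv1⟩
      · exact ⟨hst1, le_refl 1⟩
    rw [Real.one_rpow, Real.norm_eq_abs, Real.norm_eq_abs] at hmvt
    have h1 : |1 - s/u| = (u - s)/u := by
      rw [abs_of_nonneg (by linarith)]; field_simp
    rw [h1] at hmvt
    have h2 : (u - s)/u ≤ (u - s)/s :=
      div_le_div_of_nonneg_left (sub_pos.2 hu.1).le hs hu.1.le
    calc |1 - (s/u) ^ b| ≤ |b| * (s/t) ^ (b-1) * ((u - s)/u) := hmvt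
      _ ≤ |b| * (s/t) ^ (b-1) * ((u - s)/s) := by
          apply mul_le_mul_of_nonneg_left h2
          exact mul_nonneg (abs_nonneg _) (Real.rpow_pos_of_pos hst _).le
      _ = C * (u - s) := by rw [hC]; ring
  -- the dominating function is integrable
  have hdom : IntervalIntegrable (fun u => C * (u - s) ^ (H - 1/2)) volume s t := by
    apply IntervalIntegrable.const_mul
    have h := (intervalIntegral.intervalIntegrable_rpow'
      (a := 0) (b := t - s) (r := H - 1/2) (by linarith)).comp_sub_right s
    simpa using h
  -- measurability
  have hmeas : AEStronglyMeasurable (fun u => (u - s) ^ (H - 3/2) * (1 - (s/u) ^ (1/2 - H)))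
      (volume.restrict (Set.uIoc s t)) := by
    rw [uIoc_of_le hts.le]
    apply ContinuousOn.aestronglyMeasurable _ measurableSet_Ioc
    exact fun u hu => (fbm_integrand_continuousAt H s u hs hu.1).continuousWithinAt
  apply hdom.mono_fun' hmeas
  rw [uIoc_of_le hts.le]
  refine (ae_restrict_iff' measurableSet_Ioc).2 ?_
  filter_upwards with u hu
  have hu0 : 0 < u - s := sub_pos.2 hu.1
  have hX : (0:ℝ) < (u - s) ^ (H - 3/2) := Real.rpow_pos_of_pos hu0 _
  rw [Real.norm_eq_abs, abs_mul, abs_of_pos hX]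
  calc (u - s) ^ (H - 3/2) * |1 - (s/u) ^ (1/2 - H)|
      ≤ (u - s) ^ (H - 3/2) * (C * (u - s)) :=
        mul_le_mul_of_nonneg_left (key u hu) hX.le
    _ = C * (u - s) ^ (H - 1/2) := by
        rw [show (H - 1/2 : ℝ) = (H - 3/2) + 1 by ring, Real.rpow_add_one hu0.ne']
        ring

/-- For `H ∈ (0,1)`, `H ≠ 1/2`, and `s > 0`, the map `t ↦ K^H(t,s)` is differentiable on
`(s,∞)` with derivative `c_H (H - 1/2) (t-s)^{H-3/2} (s/t)^{1/2-H}`. -/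
theorem stmt_0 (H : ℝ) (hH : H ∈ Set.Ioo (0:ℝ) 1) (hH' : H ≠ 1/2)
    (s : ℝ) (hs : 0 < s) (t : ℝ) (hts : s < t) :
    HasDerivAt (fun τ => fbmK H τ s)
      (cH H * (H - 1/2) * (t - s) ^ (H - 3/2) * (s / t) ^ (1/2 - H)) t := by
  have ht0 : 0 < t := hs.trans hts
  have hts' : (0:ℝ) < t - s := sub_pos.2 hts
  set f : ℝ → ℝ := fun u => (u - s) ^ (H - 3/2) * (1 - (s/u) ^ (1/2 - H)) with hf
  -- derivative of the power term
  have h1 : HasDerivAt (fun τ : ℝ => cH H * (τ - s) ^ (H - 1/2))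
      (cH H * (1 * (H - 1/2) * (t - s) ^ (H - 1/2 - 1))) t := by
    exact (((hasDerivAt_id t).sub_const s).rpow_const (Or.inl hts'.ne')).const_mul (cH H)
  -- derivative of the integral term
  have h2 : HasDerivAt (fun τ : ℝ => ∫ u in s..τ, f u) (f t) t := by
    apply intervalIntegral.integral_hasDerivAt_right
      (fbm_integrand_integrable H hH s hs t hts)
    · have : ContinuousOn f (Set.Ioi s) := fun u hu =>
        (fbm_integrand_continuousAt H s u hs hu).continuousWithinAt
      exact this.stronglyMeasurableAtFilter isOpen_Ioi t hts
    · exact fbm_integrand_continuousAt H s t hs hts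
  have h3 := h1.add (h2.const_mul (cH H * (1/2 - H)))
  have heq : (fun τ => fbmK H τ s) =ᶠ[nhds t]
      (fun τ : ℝ => cH H * (τ - s) ^ (H - 1/2) + cH H * (1/2 - H) * ∫ u in s..τ, f u) := by
    filter_upwards [Ioi_mem_nhds hts] with τ hτ
    simp only [fbmK, hf]
    rw [if_pos ⟨hs, hτ⟩]
  apply HasDerivAt.congr_of_eventuallyEq _ heq
  convert h3 using 1
  · rfl
  rw [hf]
  simp only []
  rw [show (H - 1/2 - 1 : ℝ) = H - 3/2 by ring]
  ring
end

section
/- For every Hurst parameter H ∈ (0,1) and every t > 0, the fractional Brownian motion kernel satisfies ∫_0^t K^H(t,r)² dr = t^{2H}. -/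
open MeasureTheory Set Filter

namespace FbmAux
open Real intervalIntegral

set_option maxHeartbeats 1000000

noncomputable def F (a s : ℝ) : ℝ := ∫ x in s..1, x ^ (-2*a-1) * (1-x) ^ a
noncomputable def pp (a : ℝ) : ℝ := a/2 + 1/4 + max a 0
noncomputable def CF (a : ℝ) : ℝ := ∫ x in (0:ℝ)..1, x ^ (pp a - 2*a - 1) * (1-x) ^ a

variable {a : ℝ}

lemma pp_nonneg (ha : a ∈ Ioo (-(1/2) : ℝ) (1/2)) : 0 ≤ pp a := by
  rcases le_or_gt a 0 with h | h
  · rw [pp, max_eq_right h]; nlinarith [ha.1]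
  · rw [pp, max_eq_left h.le]; nlinarith
lemma pp_gt (ha : a ∈ Ioo (-(1/2) : ℝ) (1/2)) : 2*a < pp a := by
  rcases le_or_gt a 0 with h | h
  · rw [pp, max_eq_right h]; nlinarith
  · rw [pp, max_eq_left h.le]; nlinarith [ha.2]
lemma pp_lt (ha : a ∈ Ioo (-(1/2) : ℝ) (1/2)) : pp a < a + 1/2 := by
  rcases le_or_gt a 0 with h | h
  · rw [pp, max_eq_right h]; nlinarith [ha.1]
  · rw [pp, max_eq_left h.le]; nlinarith [ha.2]
lemma pp_lt_one (ha : a ∈ Ioo (-(1/2) : ℝ) (1/2)) : pp a < 1 := by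
  have := pp_lt ha; have := ha.2; linarith

lemma betaInt {e₁ e₂ : ℝ} (h₁ : -1 < e₁) (h₂ : -1 < e₂) :
    IntervalIntegrable (fun x : ℝ => x ^ e₁ * (1 - x) ^ e₂) volume 0 1 := by
  have half : ∀ (f₁ f₂ : ℝ), -1 < f₁ →
      IntervalIntegrable (fun x : ℝ => x ^ f₁ * (1 - x) ^ f₂) volume 0 (1/2) := by
    intro f₁ f₂ hf₁
    have hint : IntervalIntegrable (fun x : ℝ => ((1/2:ℝ) ^ f₂ + 1) * x ^ f₁) volume 0 (1/2) :=
      (intervalIntegrable_rpow' hf₁).const_mul _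
    refine hint.mono_fun' ?_ ?_
    · apply ContinuousOn.aestronglyMeasurable ?_ measurableSet_uIoc
      have : Set.uIoc (0:ℝ) (1/2) ⊆ {x : ℝ | x ≠ 0} ∩ {x : ℝ | 1 - x ≠ 0} := by
        rw [uIoc_of_le (by norm_num : (0:ℝ) ≤ 1/2)]
        intro x hx
        constructor
        · exact ne_of_gt hx.1
        · simp only [mem_setOf_eq]; intro h; nlinarith [hx.2]
      refine ContinuousOn.mul ?_ ?_
      · exact ContinuousOn.rpow_const (continuousOn_id) (fun x hx => Or.inl (this hx).1)
      · exact ContinuousOn.rpow_const (continuousOn_const.sub continuousOn_id)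
          (fun x hx => Or.inl (this hx).2)
    · rw [uIoc_of_le (by norm_num : (0:ℝ) ≤ 1/2)]
      refine (ae_restrict_iff' measurableSet_Ioc).2 (Filter.Eventually.of_forall ?_)
      intro x hx
      have hx0 : 0 < x := hx.1
      have hx2 : x ≤ 1/2 := hx.2
      have h1x : (1/2:ℝ) ≤ 1 - x := by linarith
      have hb : (1-x) ^ f₂ ≤ (1/2:ℝ) ^ f₂ + 1 := by
        rcases le_or_gt 0 f₂ with h | h
        · have : (1-x) ^ f₂ ≤ 1 ^ f₂ := rpow_le_rpow (by linarith) (by linarith) h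
          rw [one_rpow] at this
          have : (1-x) ^ f₂ ≤ 1 := this
          nlinarith [rpow_nonneg (by norm_num : (0:ℝ) ≤ 1/2) f₂]
        · have := rpow_le_rpow_of_nonpos (by norm_num : (0:ℝ) < 1/2) h1x h.le
          linarith
      simp only [norm_mul, norm_eq_abs]
      rw [abs_of_nonneg (rpow_nonneg hx0.le _), abs_of_nonneg (rpow_nonneg (by linarith) _)]
      calc x ^ f₁ * (1-x) ^ f₂ ≤ x ^ f₁ * ((1/2:ℝ) ^ f₂ + 1) :=
            mul_le_mul_of_nonneg_left hb (rpow_nonneg hx0.le _)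
        _ = ((1/2:ℝ) ^ f₂ + 1) * x ^ f₁ := by ring
  have h2' : IntervalIntegrable (fun x : ℝ => x ^ e₂ * (1 - x) ^ e₁) volume 0 (1/2) :=
    half e₂ e₁ h₂
  have := h2'.comp_sub_left 1
  norm_num at this
  have h2'' : IntervalIntegrable (fun x : ℝ => x ^ e₁ * (1 - x) ^ e₂) volume (1/2) 1 := by
    simpa [mul_comm] using this.symm
  exact (half e₁ e₂ h₁).trans h2''

lemma betaVal {p q : ℝ} (hp : 0 < p) (hq : 0 < q) :
    ∫ x in (0:ℝ)..1, x ^ (p-1) * (1-x) ^ (q-1)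
      = Real.Gamma p * Real.Gamma q / Real.Gamma (p+q) := by
  have h := Complex.Gamma_mul_Gamma_eq_betaIntegral (s := (p:ℂ)) (t := (q:ℂ))
    (by simpa using hp) (by simpa using hq)
  have hbeta : Complex.betaIntegral p q
      = ((∫ x in (0:ℝ)..1, x ^ (p-1) * (1-x) ^ (q-1) : ℝ) : ℂ) := by
    rw [Complex.betaIntegral, ← intervalIntegral.integral_ofReal]
    refine intervalIntegral.integral_congr (fun x hx => ?_)
    rw [uIcc_of_le (by norm_num : (0:ℝ) ≤ 1)] at hx
    have h1 : ((x:ℝ) ^ (p-1) * (1-x) ^ (q-1) : ℝ) = ((x ^ (p-1) : ℝ) : ℂ).re * ((1-x) ^ (q-1) : ℝ) := by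
      simp
    rw [Complex.ofReal_mul, Complex.ofReal_cpow hx.1, Complex.ofReal_cpow (by linarith [hx.2] : (0:ℝ) ≤ 1 - x)]
    push_cast
    ring
  rw [hbeta, ← Complex.ofReal_add, Complex.Gamma_ofReal, Complex.Gamma_ofReal,
    Complex.Gamma_ofReal, ← Complex.ofReal_mul, ← Complex.ofReal_mul] at h
  have h' := Complex.ofReal_inj.1 h
  have hne : Real.Gamma (p+q) ≠ 0 := (Real.Gamma_pos_of_pos (by linarith)).ne'
  field_simp [hne]
  linarith [h']

lemma rpow_diff_le {y z : ℝ} (β : ℝ) (hy : 0 < y) (hyz : y ≤ z) :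
    |z ^ β - y ^ β| ≤ |β| * max (y ^ (β-1)) (z ^ (β-1)) * (z - y) := by
  have hftc : ∫ x in y..z, β * x ^ (β-1) = z ^ β - y ^ β := by
    refine intervalIntegral.integral_eq_sub_of_hasDerivAt (f := fun x : ℝ => x ^ β) (fun x hx => ?_) ?_
    · rw [uIcc_of_le hyz] at hx
      have hx0 : x ≠ 0 := (lt_of_lt_of_le hy hx.1).ne'
      exact Real.hasDerivAt_rpow_const (Or.inl hx0)
    · apply ContinuousOn.intervalIntegrable
      refine continuousOn_const.mul (ContinuousOn.rpow_const continuousOn_id (fun x hx => ?_))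
      rw [uIcc_of_le hyz] at hx
      exact Or.inl (lt_of_lt_of_le hy hx.1).ne'
  rw [← hftc]
  have hb : ∀ x ∈ Set.uIoc y z, ‖β * x ^ (β-1)‖ ≤ |β| * max (y ^ (β-1)) (z ^ (β-1)) := by
    intro x hx
    rw [uIoc_of_le hyz] at hx
    have hx0 : 0 < x := lt_trans hy hx.1
    rw [norm_mul, norm_eq_abs, norm_eq_abs, abs_of_nonneg (rpow_nonneg hx0.le _)]
    refine mul_le_mul_of_nonneg_left ?_ (abs_nonneg _)
    rcases le_or_gt 0 (β - 1) with h | h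
    · exact le_max_of_le_right (rpow_le_rpow hx0.le hx.2 h)
    · exact le_max_of_le_left (rpow_le_rpow_of_nonpos hy hx.1.le h.le)
  calc ‖∫ x in y..z, β * x ^ (β-1)‖ ≤ |β| * max (y ^ (β-1)) (z ^ (β-1)) * |z - y| :=
        intervalIntegral.norm_integral_le_of_norm_le_const hb
    _ = |β| * max (y ^ (β-1)) (z ^ (β-1)) * (z - y) := by
        rw [abs_of_nonneg (show (0:ℝ) ≤ z - y by linarith)]

lemma gMeas (a : ℝ) : Measurable (fun x : ℝ => x ^ (-2*a-1) * (1-x) ^ a) := by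
  fun_prop

lemma oneSubInt (ha : a ∈ Ioo (-(1/2) : ℝ) (1/2)) (s₀ t₀ : ℝ) :
    IntervalIntegrable (fun x : ℝ => (1-x) ^ a) volume s₀ t₀ := by
  have h := (intervalIntegrable_rpow' (a := 1 - s₀) (b := 1 - t₀) (by linarith [ha.1] : (-1:ℝ) < a)).comp_sub_left 1
  simpa using h

lemma gInt (ha : a ∈ Ioo (-(1/2) : ℝ) (1/2)) {s₀ : ℝ} (hs₀ : 0 < s₀) (hs₁ : s₀ ≤ 1) :
    IntervalIntegrable (fun x : ℝ => x ^ (-2*a-1) * (1-x) ^ a) volume s₀ 1 := by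
  have hdom : IntervalIntegrable (fun x : ℝ => (s₀ ^ (-2*a-1) + 1) * (1-x) ^ a) volume s₀ 1 :=
    (oneSubInt ha s₀ 1).const_mul _
  refine hdom.mono_fun' ((gMeas a).aestronglyMeasurable) ?_
  rw [uIoc_of_le hs₁]
  refine (ae_restrict_iff' measurableSet_Ioc).2 (Filter.Eventually.of_forall fun x hx => ?_)
  have hx0 : 0 < x := lt_trans hs₀ hx.1
  have hx1 : x ≤ 1 := hx.2
  have hb : x ^ (-2*a-1) ≤ s₀ ^ (-2*a-1) + 1 := by
    rcases le_or_gt (-2*a-1) 0 with h | h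
    · have := rpow_le_rpow_of_nonpos hs₀ hx.1.le h
      nlinarith
    · have : x ^ (-2*a-1) ≤ 1 ^ (-2*a-1) := rpow_le_rpow hx0.le hx1 h.le
      rw [one_rpow] at this
      nlinarith [rpow_nonneg hs₀.le (-2*a-1)]
  have h1x : (0:ℝ) ≤ (1-x) ^ a := rpow_nonneg (by linarith) a
  simp only [norm_mul, norm_eq_abs]
  rw [abs_of_nonneg (rpow_nonneg hx0.le _), abs_of_nonneg h1x]
  exact mul_le_mul_of_nonneg_right hb h1x

lemma F_nonneg (ha : a ∈ Ioo (-(1/2) : ℝ) (1/2)) {s : ℝ} (hs : 0 < s) (hs1 : s ≤ 1) :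
    0 ≤ F a s := by
  refine intervalIntegral.integral_nonneg hs1 (fun x hx => ?_)
  exact mul_nonneg (rpow_nonneg (by linarith [hx.1] : (0:ℝ) ≤ x) _)
    (rpow_nonneg (by linarith [hx.2] : (0:ℝ) ≤ 1 - x) _)

lemma CF_nonneg : 0 ≤ CF a := by
  refine intervalIntegral.integral_nonneg (by norm_num) (fun x hx => ?_)
  exact mul_nonneg (rpow_nonneg hx.1 _) (rpow_nonneg (by linarith [hx.2] : (0:ℝ) ≤ 1 - x) _)

lemma ppInt (ha : a ∈ Ioo (-(1/2) : ℝ) (1/2)) :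
    IntervalIntegrable (fun x : ℝ => x ^ (pp a - 2*a - 1) * (1-x) ^ a) volume 0 1 :=
  betaInt (by linarith [pp_gt ha]) (by linarith [ha.1])

lemma F_le (ha : a ∈ Ioo (-(1/2) : ℝ) (1/2)) {s : ℝ} (hs : 0 < s) (hs1 : s ≤ 1) :
    F a s ≤ CF a * s ^ (-pp a) := by
  have hmem : s ∈ uIcc (0:ℝ) 1 := by
    rw [uIcc_of_le (by norm_num : (0:ℝ) ≤ 1)]; exact ⟨hs.le, hs1⟩
  have hmono : F a s ≤ ∫ x in s..1, s ^ (-pp a) * (x ^ (pp a - 2*a-1) * (1-x) ^ a) := by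
    refine intervalIntegral.integral_mono_on hs1 (gInt ha hs hs1)
      (((ppInt ha).mono_set (uIcc_subset_uIcc_right hmem)).const_mul _)
      (fun x hx => ?_)
    have hx0 : 0 < x := lt_of_lt_of_le hs hx.1
    have hsplit : x ^ (-2*a-1) = x ^ (-pp a) * x ^ (pp a - 2*a-1) := by
      rw [← rpow_add hx0]; ring_nf
    rw [hsplit]
    have hxp : x ^ (-pp a) ≤ s ^ (-pp a) :=
      rpow_le_rpow_of_nonpos hs hx.1 (by linarith [pp_nonneg ha])
    have : (0:ℝ) ≤ x ^ (pp a - 2*a-1) * (1-x) ^ a :=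
      mul_nonneg (rpow_nonneg hx0.le _) (rpow_nonneg (by linarith [hx.2]) _)
    calc x ^ (-pp a) * x ^ (pp a - 2*a-1) * (1-x) ^ a
        = x ^ (-pp a) * (x ^ (pp a - 2*a-1) * (1-x) ^ a) := by ring
      _ ≤ s ^ (-pp a) * (x ^ (pp a - 2*a-1) * (1-x) ^ a) :=
          mul_le_mul_of_nonneg_right hxp this
  rw [intervalIntegral.integral_const_mul] at hmono
  have hrest : ∫ x in s..1, x ^ (pp a - 2*a-1) * (1-x) ^ a ≤ CF a := by
    have hsplit : CF a = (∫ x in (0:ℝ)..s, x ^ (pp a - 2*a-1) * (1-x) ^ a)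
        + ∫ x in s..1, x ^ (pp a - 2*a-1) * (1-x) ^ a := by
      rw [CF]
      have e1 : pp a - 2*a - 1 = pp a - 2*a-1 := by ring
      rw [e1]
      exact (intervalIntegral.integral_add_adjacent_intervals
        ((ppInt ha).mono_set (uIcc_subset_uIcc_left hmem))
        ((ppInt ha).mono_set (uIcc_subset_uIcc_right hmem))).symm
    have hpos : 0 ≤ ∫ x in (0:ℝ)..s, x ^ (pp a - 2*a-1) * (1-x) ^ a := by
      refine intervalIntegral.integral_nonneg hs.le (fun x hx => ?_)
      exact mul_nonneg (rpow_nonneg hx.1 _) (rpow_nonneg (by nlinarith [hx.2] : (0:ℝ) ≤ 1 - x) _)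
    linarith
  calc F a s ≤ s ^ (-pp a) * ∫ x in s..1, x ^ (pp a - 2*a-1) * (1-x) ^ a := hmono
    _ ≤ s ^ (-pp a) * CF a := mul_le_mul_of_nonneg_left hrest (rpow_nonneg hs.le _)
    _ = CF a * s ^ (-pp a) := by ring

lemma F_contOn (ha : a ∈ Ioo (-(1/2) : ℝ) (1/2)) {s₀ : ℝ} (hs₀ : 0 < s₀) (hs₁ : s₀ ≤ 1) :
    ContinuousOn (F a) (Icc s₀ 1) := by
  have h := intervalIntegral.continuousOn_primitive_interval_left
    (f := fun x : ℝ => x ^ (-2*a-1) * (1-x) ^ a) (μ := volume) (a := s₀) (b := 1) ?_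
  · rwa [uIcc_of_le hs₁] at h
  · rw [uIcc_of_le hs₁]
    exact (intervalIntegrable_iff_integrableOn_Icc_of_le hs₁).1 (gInt ha hs₀ hs₁)

lemma F_hasDerivAt (ha : a ∈ Ioo (-(1/2) : ℝ) (1/2)) {s : ℝ} (hs : s ∈ Ioo (0:ℝ) 1) :
    HasDerivAt (F a) (-(s ^ (-2*a-1) * (1-s) ^ a)) s := by
  refine intervalIntegral.integral_hasDerivAt_left (gInt ha hs.1 hs.2.le)
    ((gMeas a).stronglyMeasurable.stronglyMeasurableAtFilter) ?_
  have h1 : ContinuousAt (fun x : ℝ => x ^ (-2*a-1)) s :=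
    Real.continuousAt_rpow_const s _ (Or.inl hs.1.ne')
  have h2 : ContinuousAt (fun x : ℝ => (1-x) ^ a) s := by
    have := Real.continuousAt_rpow_const (1-s) a (Or.inl (by nlinarith [hs.2] : (1:ℝ) - s ≠ 0))
    exact this.comp ((continuous_const.sub continuous_id).continuousAt)
  exact h1.mul h2

lemma F_abs_le (ha : a ∈ Ioo (-(1/2) : ℝ) (1/2)) {s : ℝ} (hs : 0 < s) (hs1 : s ≤ 1) :
    |F a s| ≤ CF a * s ^ (-pp a) := by
  rw [abs_of_nonneg (F_nonneg ha hs hs1)]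
  exact F_le ha hs hs1

/-- continuity of `F` on `Ioc 0 1` -/
lemma F_contIoc (ha : a ∈ Ioo (-(1/2) : ℝ) (1/2)) :
    ContinuousOn (F a) (Ioc 0 1) := by
  intro x hx
  have hx2 : 0 < x/2 := by linarith [hx.1]
  have h1 : ContinuousWithinAt (F a) (Icc (x/2) 1) x :=
    (F_contOn ha hx2 (by linarith [hx.2])) x ⟨by linarith [hx.1], hx.2⟩
  refine h1.mono_of_mem_nhdsWithin ?_
  have : Ioi (x/2) ∈ nhds x := Ioi_mem_nhds (by linarith [hx.1])
  refine mem_nhdsWithin.2 ⟨Ioi (x/2), isOpen_Ioi, mem_Ioi.mpr (by linarith [hx.1]), ?_⟩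
  rintro y ⟨hy1, hy2⟩
  exact ⟨le_of_lt hy1, hy2.2⟩

/-- generic helper : continuity on `Icc 0 1` from continuity on `Ioc 0 1` plus a
vanishing bound near `0`. -/
lemma contIcc01 {f : ℝ → ℝ} (hf : ContinuousOn f (Ioc 0 1)) (h0 : f 0 = 0)
    {C e : ℝ} (he : 0 < e)
    (hb : ∀ x : ℝ, 0 < x → x ≤ 1/2 → |f x| ≤ C * x ^ e) :
    ContinuousOn f (Icc 0 1) := by
  intro x hx
  rcases eq_or_lt_of_le hx.1 with h | h
  · rw [← h]
    rw [ContinuousWithinAt, h0]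
    have hbb : ∀ᶠ u in nhdsWithin 0 (Icc (0:ℝ) 1), ‖f u‖ ≤ C * u ^ e := by
      filter_upwards [self_mem_nhdsWithin,
        mem_nhdsWithin_of_mem_nhds (Iio_mem_nhds (by norm_num : (0:ℝ) < 1/2))] with u hu1 hu2
      rcases eq_or_lt_of_le hu1.1 with h' | h'
      · rw [← h']
        simp [h0, Real.zero_rpow he.ne']
      · exact hb u h' (le_of_lt hu2)
    refine squeeze_zero_norm' hbb ?_
    have hc : ContinuousAt (fun y : ℝ => y ^ e) (0:ℝ) :=
      Real.continuousAt_rpow_const (0:ℝ) e (Or.inr he.le)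
    have h1 : Tendsto (fun u : ℝ => u ^ e) (nhdsWithin 0 (Icc (0:ℝ) 1)) (nhds 0) := by
      have := hc.tendsto
      rw [Real.zero_rpow he.ne'] at this
      exact this.mono_left nhdsWithin_le_nhds
    simpa using h1.const_mul C
  · have h1 : ContinuousWithinAt f (Ioc 0 1) x := hf x ⟨h, hx.2⟩
    refine h1.mono_of_mem_nhdsWithin ?_
    refine mem_nhdsWithin.2 ⟨Ioi 0, isOpen_Ioi, h, ?_⟩
    rintro y ⟨hy1, hy2⟩
    exact ⟨hy1, hy2.2⟩

/-- integrability of `(1-s)^a * F a s` -/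
lemma intGF (ha : a ∈ Ioo (-(1/2) : ℝ) (1/2)) :
    IntervalIntegrable (fun s : ℝ => (1-s) ^ a * F a s) volume 0 1 := by
  have hdom : IntervalIntegrable (fun s : ℝ => CF a * (s ^ (-pp a) * (1-s) ^ a)) volume 0 1 :=
    (betaInt (by linarith [pp_lt_one ha] : (-1:ℝ) < -pp a) (by linarith [ha.1])).const_mul _
  refine hdom.mono_fun' ?_ ?_
  · rw [uIoc_of_le (by norm_num : (0:ℝ) ≤ 1)]
    exact (Measurable.aestronglyMeasurable (by fun_prop : Measurable (fun s : ℝ => (1-s) ^ a))).mul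
      ((F_contIoc ha).aestronglyMeasurable measurableSet_Ioc)
  · rw [uIoc_of_le (by norm_num : (0:ℝ) ≤ 1)]
    refine (ae_restrict_iff' measurableSet_Ioc).2 (Filter.Eventually.of_forall fun s hs => ?_)
    have hs0 : 0 < s := hs.1
    have h1s : (0:ℝ) ≤ 1 - s := by linarith [hs.2]
    simp only [norm_mul, norm_eq_abs]
    rw [abs_of_nonneg (rpow_nonneg h1s _)]
    calc (1-s) ^ a * |F a s| ≤ (1-s) ^ a * (CF a * s ^ (-pp a)) :=
          mul_le_mul_of_nonneg_left (F_abs_le ha hs0 hs.2) (rpow_nonneg h1s _)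
      _ = CF a * (s ^ (-pp a) * (1-s) ^ a) := by ring

/-- integrability of `s^{2a} F^2` -/
lemma intF2 (ha : a ∈ Ioo (-(1/2) : ℝ) (1/2)) :
    IntervalIntegrable (fun s : ℝ => s ^ (2*a) * (F a s)^2) volume 0 1 := by
  have hfeq : (fun s : ℝ => s ^ (2*a) * (F a s)^2) = (fun s : ℝ => s ^ (2*a) * (F a s * F a s)) := by
    funext s; rw [sq]
  rw [hfeq]
  have hexp : (-1:ℝ) < 2*a - 2*pp a := by linarith [pp_lt ha]
  have hdom : IntervalIntegrable (fun s : ℝ => (CF a)^2 * (s ^ (2*a - 2*pp a) * (1-s) ^ (0:ℝ)))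
      volume 0 1 := (betaInt hexp (by norm_num)).const_mul _
  refine hdom.mono_fun' ?_ ?_
  · rw [uIoc_of_le (by norm_num : (0:ℝ) ≤ 1)]
    exact (Measurable.aestronglyMeasurable (by fun_prop : Measurable (fun s : ℝ => s ^ (2*a)))).mul
      ((((F_contIoc ha).mul (F_contIoc ha))).aestronglyMeasurable measurableSet_Ioc)
  · rw [uIoc_of_le (by norm_num : (0:ℝ) ≤ 1)]
    refine (ae_restrict_iff' measurableSet_Ioc).2 (Filter.Eventually.of_forall fun s hs => ?_)
    have hs0 : 0 < s := hs.1
    have hF := F_abs_le ha hs0 hs.2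
    have hFn := F_nonneg ha hs0 hs.2
    have hCFs : 0 ≤ CF a * s ^ (-pp a) := le_trans (abs_nonneg _) hF
    simp only [norm_mul, norm_eq_abs]
    rw [abs_of_nonneg (rpow_nonneg hs0.le _)]
    calc s ^ (2*a) * (|F a s| * |F a s|)
        ≤ s ^ (2*a) * ((CF a * s ^ (-pp a)) * (CF a * s ^ (-pp a))) := by
          refine mul_le_mul_of_nonneg_left ?_ (rpow_nonneg hs0.le _)
          exact mul_le_mul hF hF (abs_nonneg _) hCFs
      _ = (CF a)^2 * (s ^ (2*a) * (s ^ (-pp a) * s ^ (-pp a))) := by ring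
      _ = (CF a)^2 * (s ^ (2*a - 2*pp a) * (1-s) ^ (0:ℝ)) := by
          rw [← Real.rpow_add hs0, ← Real.rpow_add hs0, Real.rpow_zero]
          rw [show 2*a + (-pp a + -pp a) = 2*a - 2*pp a by ring]
          ring

/-- integrability of the `M`-integrand -/
lemma intM (ha : a ∈ Ioo (-(1/2) : ℝ) (1/2)) :
    IntervalIntegrable (fun x : ℝ => x ^ (-2*a-1) * (1-x) ^ a * (1 - (1-x) ^ (a+1)))
      volume 0 1 := by
  have hdom : IntervalIntegrable (fun x : ℝ =>
      |a+1| * (x ^ (-2*a) * (1-x) ^ (2*a) + x ^ (-2*a) * (1-x) ^ a)) volume 0 1 := by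
    refine IntervalIntegrable.const_mul ?_ _
    exact (betaInt (by linarith [ha.2] : (-1:ℝ) < -2*a) (by linarith [ha.1]))
      |>.add (betaInt (by linarith [ha.2] : (-1:ℝ) < -2*a) (by linarith [ha.1]))
  refine hdom.mono_fun' (Measurable.aestronglyMeasurable (by fun_prop)) ?_
  rw [uIoc_of_le (by norm_num : (0:ℝ) ≤ 1)]
  have hne : ∀ᵐ (x:ℝ) ∂volume, x ≠ (1:ℝ) := by
    refine (MeasureTheory.ae_iff).2 ?_
    simpa using measure_singleton (1:ℝ)
  refine (ae_restrict_iff' measurableSet_Ioc).2 ?_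
  filter_upwards [hne] with x hne1 hx
  have hx0 : 0 < x := hx.1
  have hxlt : x < 1 := lt_of_le_of_ne hx.2 hne1
  have h1xpos : (0:ℝ) < 1 - x := by linarith
  have h1x : (0:ℝ) ≤ 1 - x := h1xpos.le
  have hkey : |1 - (1-x) ^ (a+1)| ≤ |a+1| * ((1-x) ^ a + 1) * x := by
    have := rpow_diff_le (a+1) h1xpos (by linarith : 1 - x ≤ 1)
    rw [Real.one_rpow] at this
    have hmax : max ((1-x) ^ (a+1-1)) ((1:ℝ) ^ (a+1-1)) ≤ (1-x) ^ a + 1 := by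
      rw [Real.one_rpow, show a+1-1 = a by ring]
      refine max_le (by linarith [rpow_nonneg h1x a]) (by linarith [rpow_nonneg h1x a])
    calc |1 - (1-x) ^ (a+1)| = |(1:ℝ) - (1-x) ^ (a+1)| := by norm_num
      _ ≤ |a+1| * max ((1-x) ^ (a+1-1)) ((1:ℝ) ^ (a+1-1)) * (1 - (1-x)) := this
      _ ≤ |a+1| * ((1-x) ^ a + 1) * x := by
          have h2 : (1:ℝ) - (1-x) = x := by ring
          rw [h2]
          refine mul_le_mul_of_nonneg_right ?_ hx0.le
          exact mul_le_mul_of_nonneg_left hmax (abs_nonneg _)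
  simp only [norm_mul, norm_eq_abs]
  rw [abs_of_nonneg (rpow_nonneg hx0.le _), abs_of_nonneg (rpow_nonneg h1x _)]
  calc x ^ (-2*a-1) * (1-x) ^ a * |1 - (1-x) ^ (a+1)|
      ≤ x ^ (-2*a-1) * (1-x) ^ a * (|a+1| * ((1-x) ^ a + 1) * x) := by
        refine mul_le_mul_of_nonneg_left hkey ?_
        exact mul_nonneg (rpow_nonneg hx0.le _) (rpow_nonneg h1x _)
    _ = |a+1| * ((x ^ (-2*a-1) * x) * ((1-x) ^ a * (1-x) ^ a) + (x ^ (-2*a-1) * x) * (1-x) ^ a) := by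
        ring
    _ = |a+1| * (x ^ (-2*a) * (1-x) ^ (2*a) + x ^ (-2*a) * (1-x) ^ a) := by
        rw [show (-2)*a = -2*a-1+1 by ring, Real.rpow_add_one hx0.ne' (-2*a-1)]
        rw [show -2*a-1+1-1 = -2*a-1 by ring]
        rw [show 2*a = a + a by ring, Real.rpow_add h1xpos]

lemma half_bound (β : ℝ) {x : ℝ} (hx0 : 0 ≤ x) (hx : x ≤ 1/2) :
    (1-x) ^ β ≤ (1/2:ℝ) ^ β + 1 := by
  have h1x : (1/2:ℝ) ≤ 1 - x := by linarith
  rcases le_or_gt 0 β with h | h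
  · have h2 : (1-x) ^ β ≤ 1 ^ β := rpow_le_rpow (by linarith) (by linarith) h
    rw [Real.one_rpow] at h2
    nlinarith [rpow_nonneg (by norm_num : (0:ℝ) ≤ 1/2) β]
  · have := rpow_le_rpow_of_nonpos (by norm_num : (0:ℝ) < 1/2) h1x h.le
    linarith

lemma one_sub_rpow_le (ha : a ∈ Ioo (-(1/2) : ℝ) (1/2)) {x : ℝ} (hx0 : 0 < x) (hxlt : x < 1) :
    |1 - (1-x) ^ (a+1)| ≤ |a+1| * ((1-x) ^ a + 1) * x := by
  have h1xpos : (0:ℝ) < 1 - x := by linarith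
  have h1x : (0:ℝ) ≤ 1 - x := h1xpos.le
  have := rpow_diff_le (a+1) h1xpos (by linarith : 1 - x ≤ 1)
  rw [Real.one_rpow] at this
  have hmax : max ((1-x) ^ (a+1-1)) ((1:ℝ) ^ (a+1-1)) ≤ (1-x) ^ a + 1 := by
    rw [Real.one_rpow, show a+1-1 = a by ring]
    refine max_le (by linarith [rpow_nonneg h1x a]) (by linarith [rpow_nonneg h1x a])
  calc |1 - (1-x) ^ (a+1)| = |(1:ℝ) - (1-x) ^ (a+1)| := by norm_num
    _ ≤ |a+1| * max ((1-x) ^ (a+1-1)) ((1:ℝ) ^ (a+1-1)) * (1 - (1-x)) := this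
    _ ≤ |a+1| * ((1-x) ^ a + 1) * x := by
        rw [show (1:ℝ) - (1-x) = x by ring]
        refine mul_le_mul_of_nonneg_right ?_ hx0.le
        exact mul_le_mul_of_nonneg_left hmax (abs_nonneg _)

lemma step_LD (ha : a ∈ Ioo (-(1/2) : ℝ) (1/2)) :
    (2*a+1) * ∫ s in (0:ℝ)..1, s ^ (2*a) * (F a s)^2
      = 2 * ∫ s in (0:ℝ)..1, (1-s) ^ a * F a s := by
  set f : ℝ → ℝ := fun s => s ^ (2*a+1) * (F a s)^2 with hf
  have hF1 : F a 1 = 0 := by simp [F]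
  have hf0 : f 0 = 0 := by
    simp [hf, Real.zero_rpow (show 2*a+1 ≠ 0 by linarith [ha.1])]
  have hf1 : f 1 = 0 := by simp [hf, hF1]
  have hderiv : ∀ s ∈ Ioo (0:ℝ) 1, HasDerivAt f
      ((2*a+1) * (s ^ (2*a) * (F a s)^2) - 2 * ((1-s) ^ a * F a s)) s := by
    intro s hs
    have h1 : HasDerivAt (fun s : ℝ => s ^ (2*a+1)) ((2*a+1) * s ^ (2*a+1-1)) s :=
      Real.hasDerivAt_rpow_const (Or.inl hs.1.ne')
    have h2 : HasDerivAt (fun s : ℝ => (F a s)^2)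
        (2 * F a s * (-(s ^ (-2*a-1) * (1-s) ^ a))) s := by
      have := (F_hasDerivAt ha hs).pow 2
      norm_num at this
      refine this.congr_deriv (Eq.symm ?_)
      ring
    have h3 := h1.mul h2
    have h4 : s ^ (2*a+1) * s ^ (-2*a-1) = 1 := by
      rw [← Real.rpow_add hs.1, show 2*a+1 + (-2*a-1) = 0 by ring, Real.rpow_zero]
    refine h3.congr_deriv (Eq.symm ?_)
    rw [show 2*a+1-1 = 2*a by ring]
    linear_combination (2 * F a s * (1-s) ^ a) * h4
  have hcont : ContinuousOn f (Icc 0 1) := by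
    refine contIcc01 ?_ hf0 (he := show (0:ℝ) < 2*a+1-2*pp a by linarith [pp_lt ha])
      (C := (CF a)^2) ?_
    · refine ContinuousOn.mul ?_ ((F_contIoc ha).pow 2)
      intro x hx
      exact (Real.continuousAt_rpow_const x (2*a+1) (Or.inl hx.1.ne')).continuousWithinAt
    · intro x hx0 hx2
      have hx1 : x ≤ 1 := by linarith
      have hF := F_abs_le ha hx0 hx1
      rw [hf]
      simp only [abs_mul]
      rw [abs_of_nonneg (rpow_nonneg hx0.le _), abs_of_nonneg (sq_nonneg _), sq]
      have hCFs : 0 ≤ CF a * x ^ (-pp a) := le_trans (abs_nonneg _) hF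
      calc x ^ (2*a+1) * (F a x * F a x)
          ≤ x ^ (2*a+1) * ((CF a * x ^ (-pp a)) * (CF a * x ^ (-pp a))) := by
            refine mul_le_mul_of_nonneg_left ?_ (rpow_nonneg hx0.le _)
            calc F a x * F a x ≤ |F a x| * |F a x| := by
                  rw [← abs_mul]; exact le_abs_self _
              _ ≤ (CF a * x ^ (-pp a)) * (CF a * x ^ (-pp a)) :=
                  mul_le_mul hF hF (abs_nonneg _) hCFs
        _ = (CF a)^2 * (x ^ (2*a+1) * (x ^ (-pp a) * x ^ (-pp a))) := by ring
        _ = (CF a)^2 * x ^ (2*a+1-2*pp a) := by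
            rw [← Real.rpow_add hx0, ← Real.rpow_add hx0,
              show 2*a+1 + (-pp a + -pp a) = 2*a+1-2*pp a by ring]
  have hint : IntervalIntegrable (fun s : ℝ =>
      (2*a+1) * (s ^ (2*a) * (F a s)^2) - 2 * ((1-s) ^ a * F a s)) volume 0 1 :=
    ((intF2 ha).const_mul _).sub ((intGF ha).const_mul _)
  have hftc := intervalIntegral.integral_eq_sub_of_hasDeriv_right_of_le (by norm_num) hcont
    (fun s hs => (hderiv s hs).hasDerivWithinAt) hint
  rw [hf1, hf0, sub_zero] at hftc
  rw [intervalIntegral.integral_sub ((intF2 ha).const_mul _) ((intGF ha).const_mul _),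
    intervalIntegral.integral_const_mul, intervalIntegral.integral_const_mul] at hftc
  linarith

lemma step_LE (ha : a ∈ Ioo (-(1/2) : ℝ) (1/2)) :
    (a+1) * ∫ s in (0:ℝ)..1, (1-s) ^ a * F a s
      = ∫ x in (0:ℝ)..1, x ^ (-2*a-1) * (1-x) ^ a * (1 - (1-x) ^ (a+1)) := by
  have ha1 : (0:ℝ) < a + 1 := by linarith [ha.1]
  set f : ℝ → ℝ := fun s => (1 - (1-s) ^ (a+1))/(a+1) * F a s with hf
  have hF1 : F a 1 = 0 := by simp [F]
  have hf0 : f 0 = 0 := by simp [hf]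
  have hf1 : f 1 = 0 := by simp [hf, hF1]
  have hPderiv : ∀ s ∈ Ioo (0:ℝ) 1,
      HasDerivAt (fun s : ℝ => (1 - (1-s) ^ (a+1))/(a+1)) ((1-s) ^ a) s := by
    intro s hs
    have h2 : HasDerivAt (fun s : ℝ => (1-s) ^ (a+1)) (-((a+1) * (1-s) ^ a)) s := by
      have hin : HasDerivAt (fun s : ℝ => 1 - s) (-1) s := by
        simpa using (hasDerivAt_id s).const_sub 1
      have hout := Real.hasDerivAt_rpow_const (x := 1-s) (p := a+1)
        (Or.inl (by intro hh; nlinarith [hs.2] : (1:ℝ) - s ≠ 0))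
      have := hout.comp s hin
      refine this.congr_deriv (Eq.symm ?_)
      rw [show a+1-1 = a by ring]
      ring
    have := (h2.const_sub 1).div_const (a+1)
    refine this.congr_deriv (Eq.symm ?_)
    field_simp
  have hderiv : ∀ s ∈ Ioo (0:ℝ) 1, HasDerivAt f
      ((1-s) ^ a * F a s
        - (1/(a+1)) * (s ^ (-2*a-1) * (1-s) ^ a * (1 - (1-s) ^ (a+1)))) s := by
    intro s hs
    have := (hPderiv s hs).mul (F_hasDerivAt ha hs)
    refine this.congr_deriv (Eq.symm ?_)
    field_simp
    ring
  have hcont : ContinuousOn f (Icc 0 1) := by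
    refine contIcc01 ?_ hf0
      (he := show (0:ℝ) < 1 - pp a by linarith [pp_lt_one ha])
      (C := ((1/2:ℝ) ^ a + 2) * CF a) ?_
    · refine ContinuousOn.mul (ContinuousOn.div_const ?_ _) (F_contIoc ha)
      refine continuousOn_const.sub ?_
      intro x hx
      have hout : ContinuousAt (fun y : ℝ => y ^ (a+1)) (1-x) :=
        Real.continuousAt_rpow_const (1-x) (a+1) (Or.inr (by linarith [ha.1]))
      have hin : ContinuousAt (fun s : ℝ => 1 - s) x :=
        (continuous_const.sub continuous_id).continuousAt
      exact (ContinuousAt.comp hout hin).continuousWithinAt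
    · intro x hx0 hx2
      have hxlt : x < 1 := by linarith
      have hF := F_abs_le ha hx0 (by linarith)
      have hkey := one_sub_rpow_le ha hx0 hxlt
      have hhalf : (1-x) ^ a + 1 ≤ (1/2:ℝ) ^ a + 2 := by
        have := half_bound a (x := x) hx0.le hx2
        linarith
      rw [hf]
      simp only [abs_mul, abs_div]
      rw [abs_of_pos ha1]
      have h1 : |1 - (1-x) ^ (a+1)| / (a+1) ≤ ((1/2:ℝ) ^ a + 2) * x := by
        rw [div_le_iff₀ ha1]
        calc |1 - (1-x) ^ (a+1)| ≤ |a+1| * ((1-x) ^ a + 1) * x := hkey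
          _ = (a+1) * (((1-x) ^ a + 1) * x) := by rw [abs_of_pos ha1]; ring
          _ ≤ (a+1) * (((1/2:ℝ) ^ a + 2) * x) := by
              refine mul_le_mul_of_nonneg_left ?_ ha1.le
              exact mul_le_mul_of_nonneg_right hhalf hx0.le
          _ = ((1/2:ℝ) ^ a + 2) * x * (a+1) := by ring
      calc |1 - (1-x) ^ (a+1)| / (a+1) * |F a x|
          ≤ (((1/2:ℝ) ^ a + 2) * x) * (CF a * x ^ (-pp a)) :=
            mul_le_mul h1 hF (abs_nonneg _) (by positivity)
        _ = ((1/2:ℝ) ^ a + 2) * CF a * (x ^ (1:ℝ) * x ^ (-pp a)) := by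
            rw [Real.rpow_one]; ring
        _ = ((1/2:ℝ) ^ a + 2) * CF a * x ^ (1 - pp a) := by
            rw [← Real.rpow_add hx0, show (1:ℝ) + -pp a = 1 - pp a by ring]
  have hint : IntervalIntegrable (fun s : ℝ =>
      (1-s) ^ a * F a s
        - (1/(a+1)) * (s ^ (-2*a-1) * (1-s) ^ a * (1 - (1-s) ^ (a+1)))) volume 0 1 :=
    (intGF ha).sub ((intM ha).const_mul _)
  have hftc := intervalIntegral.integral_eq_sub_of_hasDeriv_right_of_le (by norm_num) hcont
    (fun s hs => (hderiv s hs).hasDerivWithinAt) hint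
  rw [hf1, hf0, sub_zero] at hftc
  rw [intervalIntegral.integral_sub (intGF ha) ((intM ha).const_mul _),
    intervalIntegral.integral_const_mul] at hftc
  have h3 : (∫ s in (0:ℝ)..1, (1-s) ^ a * F a s)
      = 1/(a+1) * ∫ x in (0:ℝ)..1, x ^ (-2*a-1) * (1-x) ^ a * (1 - (1-x) ^ (a+1)) := by
    linarith
  rw [h3, ← mul_assoc]
  field_simp

lemma step_LF (ha : a ∈ Ioo (-(1/2) : ℝ) (1/2)) (ha0 : a ≠ 0) :
    (2*a) * ∫ x in (0:ℝ)..1, x ^ (-2*a-1) * (1-x) ^ a * (1 - (1-x) ^ (a+1))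
      = (a-1) * (∫ x in (0:ℝ)..1, x ^ (-2*a) * (1-x) ^ a)
        + 2 * ∫ x in (0:ℝ)..1, x ^ (-2*a) * (1-x) ^ (2*a+1) := by
  set R : ℝ → ℝ := fun x => x ^ (-2*a) * ((1-x) ^ (a+1) - (1-x) ^ (2*a+2)) with hR
  have hR0 : R 0 = 0 := by
    simp [hR, Real.zero_rpow (show -2*a ≠ 0 by simpa using ha0)]
  have hR1 : R 1 = 0 := by
    simp [hR, Real.zero_rpow (show a+1 ≠ 0 by linarith [ha.1]),
      Real.zero_rpow (show 2*a+2 ≠ 0 by linarith [ha.1])]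
  have hderiv : ∀ x ∈ Ioo (0:ℝ) 1, HasDerivAt R
      (-(2*a) * (x ^ (-2*a-1) * (1-x) ^ a * (1 - (1-x) ^ (a+1)))
        + (a-1) * (x ^ (-2*a) * (1-x) ^ a) + 2 * (x ^ (-2*a) * (1-x) ^ (2*a+1))) x := by
    intro x hx
    have hx0 : 0 < x := hx.1
    have h1xpos : (0:ℝ) < 1 - x := by nlinarith [hx.2]
    have hin : HasDerivAt (fun x : ℝ => 1 - x) (-1) x := by
      simpa using (hasDerivAt_id x).const_sub 1
    have h1 : HasDerivAt (fun x : ℝ => x ^ (-2*a)) ((-2*a) * x ^ (-2*a-1)) x := by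
      have := Real.hasDerivAt_rpow_const (x := x) (p := -2*a) (Or.inl hx0.ne')
      convert this using 2 <;> ring_nf
    have h2 : HasDerivAt (fun x : ℝ => (1-x) ^ (a+1)) (-((a+1) * (1-x) ^ a)) x := by
      have hout := Real.hasDerivAt_rpow_const (x := 1-x) (p := a+1) (Or.inl h1xpos.ne')
      have := hout.comp x hin
      refine this.congr_deriv (Eq.symm ?_)
      rw [show a+1-1 = a by ring]
      ring
    have h3 : HasDerivAt (fun x : ℝ => (1-x) ^ (2*a+2)) (-((2*a+2) * (1-x) ^ (2*a+1))) x := by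
      have hout := Real.hasDerivAt_rpow_const (x := 1-x) (p := 2*a+2) (Or.inl h1xpos.ne')
      have := hout.comp x hin
      refine this.congr_deriv (Eq.symm ?_)
      rw [show 2*a+2-1 = 2*a+1 by ring]
      ring
    have htot := h1.mul (h2.sub h3)
    refine htot.congr_deriv (Eq.symm ?_)
    have e1 : x ^ (-2*a) = x ^ (-2*a-1) * x := by
      rw [show -2*a = -2*a-1+1 by ring, Real.rpow_add_one hx0.ne']
      rw [show -2*a-1+1-1 = -2*a-1 by ring]
    have e2 : (1-x) ^ (a+1) = (1-x) ^ a * (1-x) := Real.rpow_add_one h1xpos.ne' a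
    have e3 : (1-x) ^ (2*a+1) = (1-x) ^ a * ((1-x) ^ a * (1-x)) := by
      rw [show 2*a+1 = a+(a+1) by ring, Real.rpow_add h1xpos, e2]
    have e4 : (1-x) ^ (2*a+2) = ((1-x) ^ a * (1-x)) * ((1-x) ^ a * (1-x)) := by
      rw [show 2*a+2 = (a+1)+(a+1) by ring, Real.rpow_add h1xpos, e2]
    simp only [Pi.sub_apply]
    rw [e1, e2, e3, e4]
    ring
  have hcont : ContinuousOn R (Icc 0 1) := by
    refine contIcc01 ?_ hR0
      (he := show (0:ℝ) < 1 - 2*a by linarith [ha.2])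
      (C := |a+1| * (((1/2:ℝ) ^ (a+1) + 1) * ((1/2:ℝ) ^ a + 2))) ?_
    · refine ContinuousOn.mul ?_ (ContinuousOn.sub ?_ ?_)
      · intro x hx
        exact (Real.continuousAt_rpow_const x (-2*a) (Or.inl hx.1.ne')).continuousWithinAt
      · intro x hx
        exact ((Real.continuousAt_rpow_const (1-x) (a+1) (Or.inr (by linarith [ha.1]))).comp
          (continuous_const.sub continuous_id).continuousAt).continuousWithinAt
      · intro x hx
        exact ((Real.continuousAt_rpow_const (1-x) (2*a+2) (Or.inr (by linarith [ha.1]))).comp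
          (continuous_const.sub continuous_id).continuousAt).continuousWithinAt
    · intro x hx0 hx2
      have hxlt : x < 1 := by linarith
      have h1xpos : (0:ℝ) < 1 - x := by linarith
      have e5 : (1-x) ^ (2*a+2) = (1-x) ^ (a+1) * (1-x) ^ (a+1) := by
        rw [show 2*a+2 = (a+1)+(a+1) by ring, Real.rpow_add h1xpos]
      have hsplit : R x = x ^ (-2*a) * ((1-x) ^ (a+1) * (1 - (1-x) ^ (a+1))) := by
        rw [hR]
        simp only []
        rw [e5]
        ring
      rw [hsplit]
      have hb1 : (1-x) ^ (a+1) ≤ (1/2:ℝ) ^ (a+1) + 1 := half_bound (a+1) hx0.le hx2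
      have hb2 := one_sub_rpow_le ha hx0 hxlt
      have hb3 : (1-x) ^ a + 1 ≤ (1/2:ℝ) ^ a + 2 := by
        have := half_bound a (x := x) hx0.le hx2
        linarith
      simp only [abs_mul]
      rw [abs_of_nonneg (rpow_nonneg hx0.le _), abs_of_nonneg (rpow_nonneg h1xpos.le _)]
      calc x ^ (-2*a) * ((1-x) ^ (a+1) * |1 - (1-x) ^ (a+1)|)
          ≤ x ^ (-2*a) * (((1/2:ℝ) ^ (a+1) + 1) * (|a+1| * (((1/2:ℝ) ^ a + 2) * x))) := by
            refine mul_le_mul_of_nonneg_left ?_ (rpow_nonneg hx0.le _)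
            refine mul_le_mul hb1 ?_ (abs_nonneg _) (by positivity)
            calc |1 - (1-x) ^ (a+1)| ≤ |a+1| * ((1-x) ^ a + 1) * x := hb2
              _ ≤ |a+1| * (((1/2:ℝ) ^ a + 2) * x) := by
                  rw [mul_assoc]
                  refine mul_le_mul_of_nonneg_left ?_ (abs_nonneg _)
                  exact mul_le_mul_of_nonneg_right hb3 hx0.le
        _ = |a+1| * (((1/2:ℝ) ^ (a+1) + 1) * ((1/2:ℝ) ^ a + 2)) * (x ^ (-2*a) * x ^ (1:ℝ)) := by
            rw [Real.rpow_one]; ring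
        _ = |a+1| * (((1/2:ℝ) ^ (a+1) + 1) * ((1/2:ℝ) ^ a + 2)) * x ^ (1-2*a) := by
            rw [← Real.rpow_add hx0, show -2*a + 1 = 1-2*a by ring]
  have hb1 : IntervalIntegrable (fun x : ℝ => x ^ (-2*a) * (1-x) ^ a) volume 0 1 :=
    betaInt (by linarith [ha.2]) (by linarith [ha.1])
  have hb2 : IntervalIntegrable (fun x : ℝ => x ^ (-2*a) * (1-x) ^ (2*a+1)) volume 0 1 :=
    betaInt (by linarith [ha.2]) (by linarith [ha.1])
  have hint : IntervalIntegrable (fun x : ℝ =>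
      -(2*a) * (x ^ (-2*a-1) * (1-x) ^ a * (1 - (1-x) ^ (a+1)))
        + (a-1) * (x ^ (-2*a) * (1-x) ^ a) + 2 * (x ^ (-2*a) * (1-x) ^ (2*a+1))) volume 0 1 :=
    (((intM ha).const_mul _).add (hb1.const_mul _)).add (hb2.const_mul _)
  have hftc := intervalIntegral.integral_eq_sub_of_hasDeriv_right_of_le (by norm_num) hcont
    (fun x hx => (hderiv x hx).hasDerivWithinAt) hint
  rw [hR1, hR0, sub_zero] at hftc
  rw [intervalIntegral.integral_add (((intM ha).const_mul _).add (hb1.const_mul _)) (hb2.const_mul _),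
    intervalIntegral.integral_add ((intM ha).const_mul _) (hb1.const_mul _),
    intervalIntegral.integral_const_mul, intervalIntegral.integral_const_mul,
    intervalIntegral.integral_const_mul] at hftc
  linarith


lemma sub_int (ha : a ∈ Ioo (-(1/2) : ℝ) (1/2)) {s : ℝ} (hs : s ∈ Ioo (0:ℝ) 1) :
    ∫ u in s..1, (u-s) ^ a * u ^ (a-1) = s ^ (2*a) * F a s := by
  obtain ⟨hs0, hs1⟩ := hs
  have himg : (fun x : ℝ => s / x) '' Ioo s 1 = Ioo s 1 := by
    ext y
    constructor
    · rintro ⟨x, hx, rfl⟩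
      have hx0 : 0 < x := lt_trans hs0 hx.1
      constructor
      · rw [lt_div_iff₀ hx0]
        nlinarith [hx.2]
      · rw [div_lt_one hx0]
        exact hx.1
    · intro hy
      have hy0 : 0 < y := lt_trans hs0 hy.1
      refine ⟨s / y, ⟨?_, ?_⟩, by field_simp⟩
      · rw [lt_div_iff₀ hy0]; nlinarith [hy.2]
      · rw [div_lt_one hy0]; exact hy.1
  have hderiv : ∀ x ∈ Ioo s 1, HasDerivWithinAt (fun x : ℝ => s / x) (-(s / (x*x))) (Ioo s 1) x := by
    intro x hx
    have hx0 : x ≠ 0 := (lt_trans hs0 hx.1).ne'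
    have h := ((hasDerivAt_inv hx0).const_mul s).hasDerivWithinAt (s := Ioo s 1)
    have e : s * -(x^2)⁻¹ = -(s/(x*x)) := by field_simp [sq]
    simpa [div_eq_mul_inv, e] using h
  have hinj : InjOn (fun x : ℝ => s / x) (Ioo s 1) := by
    intro x hx y hy hxy
    have hx0 : 0 < x := lt_trans hs0 hx.1
    have hy0 : 0 < y := lt_trans hs0 hy.1
    simp only [] at hxy
    rw [div_eq_div_iff hx0.ne' hy0.ne'] at hxy
    exact (mul_left_cancel₀ hs0.ne' hxy).symm
  have key := integral_image_eq_integral_abs_deriv_smul measurableSet_Ioo hderiv hinj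
    (fun u : ℝ => (u-s) ^ a * u ^ (a-1))
  rw [himg] at key
  have lhs_eq : ∫ u in s..1, (u-s) ^ a * u ^ (a-1)
      = ∫ u in Ioo s 1, (u-s) ^ a * u ^ (a-1) := by
    rw [intervalIntegral.integral_of_le hs1.le, ← integral_Ioc_eq_integral_Ioo]
  have rhs_eq : ∫ x in Ioo s 1, |(-(s / (x*x)))| • ((s/x - s) ^ a * (s/x) ^ (a-1))
      = ∫ x in Ioo s 1, s ^ (2*a) * (x ^ (-2*a-1) * (1-x) ^ a) := by
    refine setIntegral_congr_fun measurableSet_Ioo (fun x hx => ?_)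
    have hx0 : 0 < x := lt_trans hs0 hx.1
    have hx1 : x < 1 := hx.2
    have habs : |(-(s / (x*x)))| = s * x ^ (-(2:ℝ)) := by
      rw [abs_neg, abs_of_pos (by positivity), Real.rpow_neg hx0.le, div_eq_mul_inv]
      congr 1
      rw [show ((2:ℝ)) = ((2:ℕ):ℝ) by norm_num, Real.rpow_natCast]
      rw [sq]
    have e1 : s/x - s = s * (1-x) * x⁻¹ := by field_simp
    have e2 : (s * (1-x) * x⁻¹) ^ a = s ^ a * (1-x) ^ a * x ^ (-a) := by
      rw [Real.mul_rpow (by nlinarith : (0:ℝ) ≤ s*(1-x)) (by positivity),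
        Real.mul_rpow hs0.le (by linarith), Real.inv_rpow hx0.le, ← Real.rpow_neg hx0.le]
    have e3 : (s/x) ^ (a-1) = s ^ (a-1) * x ^ (-(a-1)) := by
      rw [div_eq_mul_inv, Real.mul_rpow hs0.le (by positivity), Real.inv_rpow hx0.le,
        ← Real.rpow_neg hx0.le]
    rw [smul_eq_mul, habs, e1, e2, e3]
    have es : s * (s ^ a * s ^ (a-1)) = s ^ (2*a) := by
      have h1 : s * (s ^ a * s ^ (a-1)) = s ^ (1:ℝ) * s ^ (a + (a-1)) := by
        rw [Real.rpow_add hs0, Real.rpow_one]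
      rw [h1, ← Real.rpow_add hs0]
      congr 1
      ring
    have ex : x ^ (-(2:ℝ)) * (x ^ (-a) * x ^ (-(a-1))) = x ^ (-2*a-1) := by
      rw [← Real.rpow_add hx0, ← Real.rpow_add hx0]
      congr 1
      ring
    calc s * x ^ (-(2:ℝ)) * (s ^ a * (1-x) ^ a * x ^ (-a) * (s ^ (a-1) * x ^ (-(a-1))))
        = (s * (s ^ a * s ^ (a-1))) * (x ^ (-(2:ℝ)) * (x ^ (-a) * x ^ (-(a-1)))) * (1-x) ^ a := by
          ring
      _ = s ^ (2*a) * (x ^ (-2*a-1) * (1-x) ^ a) := by rw [es, ex]; ring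
  rw [lhs_eq, key, rhs_eq, MeasureTheory.integral_const_mul]
  congr 1
  rw [F, intervalIntegral.integral_of_le hs1.le, ← integral_Ioc_eq_integral_Ioo]

lemma ibp_kernel (ha : a ∈ Ioo (-(1/2) : ℝ) (1/2)) {s : ℝ} (hs : s ∈ Ioo (0:ℝ) 1) :
    (1-s) ^ a + (-a) * ∫ u in s..1, (u-s) ^ (a-1) * (1 - (s/u) ^ (-a))
      = s ^ (-a) * (1-s) ^ a - a * s ^ a * F a s := by
  obtain ⟨hs0, hs1⟩ := hs
  -- rewrite the integrand
  have hcongr : ∫ u in s..1, (u-s) ^ (a-1) * (1 - (s/u) ^ (-a))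
      = ∫ u in s..1, (u-s) ^ (a-1) * (1 - s ^ (-a) * u ^ a) := by
    refine intervalIntegral.integral_congr (fun u hu => ?_)
    rw [uIcc_of_le hs1.le] at hu
    have hu0 : 0 < u := lt_of_lt_of_le hs0 hu.1
    congr 2
    rw [div_eq_mul_inv, Real.mul_rpow hs0.le (by positivity), Real.inv_rpow hu0.le,
      ← Real.rpow_neg hu0.le, neg_neg]
  -- the function Φ and its derivative
  set Φ : ℝ → ℝ := fun u => (u-s) ^ a * (1 - s ^ (-a) * u ^ a) with hΦ
  have hΦs : Φ s = 0 := by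
    have : 1 - s ^ (-a) * s ^ a = 0 := by
      rw [← Real.rpow_add hs0]
      norm_num
    simp [hΦ, this]
  have hΦ1 : Φ 1 = (1-s) ^ a * (1 - s ^ (-a)) := by simp [hΦ]
  have hbound : ∀ u : ℝ, s < u → u ≤ 1 → |1 - s ^ (-a) * u ^ a| ≤ |a| * s ^ (-(1:ℝ)) * (u - s) := by
    intro u hsu hu1
    have hu0 : 0 < u := lt_trans hs0 hsu
    have h1 : 1 - s ^ (-a) * u ^ a = s ^ (-a) * (s ^ a - u ^ a) := by
      rw [mul_sub, ← Real.rpow_add hs0]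
      norm_num
    rw [h1, abs_mul, abs_of_nonneg (rpow_nonneg hs0.le _), abs_sub_comm]
    have h2 := rpow_diff_le a hs0 hsu.le
    have hmax : max (s ^ (a-1)) (u ^ (a-1)) = s ^ (a-1) := by
      rw [max_eq_left]
      exact rpow_le_rpow_of_nonpos hs0 hsu.le (by linarith [ha.2])
    rw [hmax] at h2
    calc s ^ (-a) * |u ^ a - s ^ a| ≤ s ^ (-a) * (|a| * s ^ (a-1) * (u-s)) :=
          mul_le_mul_of_nonneg_left h2 (rpow_nonneg hs0.le _)
      _ = |a| * (s ^ (-a) * s ^ (a-1)) * (u-s) := by ring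
      _ = |a| * s ^ (-(1:ℝ)) * (u-s) := by
          rw [← Real.rpow_add hs0, show -a + (a-1) = -(1:ℝ) by ring]
  -- integrability of the two pieces
  have hφ₂ : IntervalIntegrable (fun u : ℝ => (u-s) ^ a * u ^ (a-1)) volume s 1 := by
    have hdom : IntervalIntegrable (fun u : ℝ => s ^ (a-1) * (u-s) ^ a) volume s 1 := by
      have := (intervalIntegrable_rpow' (a := 0) (b := 1-s) (by linarith [ha.1] : (-1:ℝ) < a)).comp_sub_right s
      simpa using this.const_mul (s ^ (a-1))
    refine hdom.mono_fun' (Measurable.aestronglyMeasurable (by fun_prop)) ?_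
    rw [uIoc_of_le hs1.le]
    refine (ae_restrict_iff' measurableSet_Ioc).2 (Filter.Eventually.of_forall fun u hu => ?_)
    have hu0 : 0 < u := lt_trans hs0 hu.1
    have h1 : u ^ (a-1) ≤ s ^ (a-1) :=
      rpow_le_rpow_of_nonpos hs0 hu.1.le (by linarith [ha.2])
    simp only [norm_mul, norm_eq_abs]
    rw [abs_of_nonneg (rpow_nonneg (by linarith [hu.1] : (0:ℝ) ≤ u - s) _),
      abs_of_nonneg (rpow_nonneg hu0.le _)]
    calc (u-s) ^ a * u ^ (a-1) ≤ (u-s) ^ a * s ^ (a-1) :=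
          mul_le_mul_of_nonneg_left h1 (rpow_nonneg (by linarith [hu.1]) _)
      _ = s ^ (a-1) * (u-s) ^ a := by ring
  have hφ₁ : IntervalIntegrable (fun u : ℝ => (u-s) ^ (a-1) * (1 - s ^ (-a) * u ^ a)) volume s 1 := by
    have hdom : IntervalIntegrable (fun u : ℝ => (|a| * s ^ (-(1:ℝ))) * (u-s) ^ a) volume s 1 := by
      have := (intervalIntegrable_rpow' (a := 0) (b := 1-s) (by linarith [ha.1] : (-1:ℝ) < a)).comp_sub_right s
      simpa using this.const_mul (|a| * s ^ (-(1:ℝ)))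
    refine hdom.mono_fun' (Measurable.aestronglyMeasurable (by fun_prop)) ?_
    rw [uIoc_of_le hs1.le]
    refine (ae_restrict_iff' measurableSet_Ioc).2 (Filter.Eventually.of_forall fun u hu => ?_)
    have hus : 0 < u - s := by linarith [hu.1]
    simp only [norm_mul, norm_eq_abs]
    rw [abs_of_nonneg (rpow_nonneg hus.le _)]
    calc (u-s) ^ (a-1) * |1 - s ^ (-a) * u ^ a|
        ≤ (u-s) ^ (a-1) * (|a| * s ^ (-(1:ℝ)) * (u-s)) :=
          mul_le_mul_of_nonneg_left (hbound u hu.1 hu.2) (rpow_nonneg hus.le _)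
      _ = |a| * s ^ (-(1:ℝ)) * ((u-s) ^ (a-1) * (u-s) ^ (1:ℝ)) := by
          rw [Real.rpow_one]; ring
      _ = |a| * s ^ (-(1:ℝ)) * (u-s) ^ a := by
          rw [← Real.rpow_add hus]
          norm_num
  -- derivative of Φ on (s,1)
  have hderiv : ∀ u ∈ Ioo s 1, HasDerivAt Φ
      (a * ((u-s) ^ (a-1) * (1 - s ^ (-a) * u ^ a)) - s ^ (-a) * (a * ((u-s) ^ a * u ^ (a-1)))) u := by
    intro u hu
    have hus : u - s ≠ 0 := by have := hu.1; intro h; nlinarith [hu.1]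
    have hu0 : u ≠ 0 := (lt_trans hs0 hu.1).ne'
    have h1 : HasDerivAt (fun u : ℝ => (u-s) ^ a) (a * (u-s) ^ (a-1)) u := by
      have := (Real.hasDerivAt_rpow_const (x := u - s) (p := a) (Or.inl hus)).comp u
        ((hasDerivAt_id u).sub_const s)
      exact this.congr_deriv (by simp)
    have h2 : HasDerivAt (fun u : ℝ => 1 - s ^ (-a) * u ^ a) (-(s ^ (-a) * (a * u ^ (a-1)))) u := by
      have := ((Real.hasDerivAt_rpow_const (x := u) (p := a) (Or.inl hu0)).const_mul (s ^ (-a))).const_sub 1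
      simpa using this
    have := h1.mul h2
    refine this.congr_deriv (Eq.symm ?_)
    ring
  -- continuity of Φ on [s,1]
  have hcont : ContinuousOn Φ (Icc s 1) := by
    intro x hx
    rcases eq_or_lt_of_le hx.1 with h | h
    · -- x = s : continuity via squeeze
      rw [← h]
      rw [ContinuousWithinAt, hΦs]
      have hb : ∀ᶠ u in nhdsWithin s (Icc s 1), ‖Φ u‖ ≤ (|a| * s ^ (-(1:ℝ))) * (u - s) ^ (a+1) := by
        refine eventually_nhdsWithin_of_forall (fun u hu => ?_)
        rcases eq_or_lt_of_le hu.1 with h' | h'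
        · rw [← h']
          simp [hΦs, Real.zero_rpow (by linarith [ha.1] : a + 1 ≠ 0)]
        · have hus : 0 < u - s := by linarith
          rw [hΦ, norm_mul, norm_eq_abs, norm_eq_abs, abs_of_nonneg (rpow_nonneg hus.le _)]
          calc (u-s) ^ a * |1 - s ^ (-a) * u ^ a|
              ≤ (u-s) ^ a * (|a| * s ^ (-(1:ℝ)) * (u-s)) :=
                mul_le_mul_of_nonneg_left (hbound u h' hu.2) (rpow_nonneg hus.le _)
            _ = (|a| * s ^ (-(1:ℝ))) * ((u-s) ^ a * (u-s) ^ (1:ℝ)) := by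
                rw [Real.rpow_one]; ring
            _ = (|a| * s ^ (-(1:ℝ))) * (u-s) ^ (a+1) := by
                rw [← Real.rpow_add hus]
      refine squeeze_zero_norm' hb ?_
      have h1 : Tendsto (fun u : ℝ => (u - s) ^ (a+1)) (nhdsWithin s (Icc s 1)) (nhds 0) := by
        have hc : ContinuousAt (fun y : ℝ => y ^ (a+1)) (0:ℝ) :=
          Real.continuousAt_rpow_const (0:ℝ) (a+1) (Or.inr (by linarith [ha.1]))
        have hsub : ContinuousAt (fun u : ℝ => u - s) s :=
          (continuous_id.sub continuous_const).continuousAt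
        have hcomp := ContinuousAt.comp (x := s) (by simpa using hc) hsub
        have h0 : (fun u : ℝ => (u - s) ^ (a+1)) s = 0 := by
          simp [Real.zero_rpow (by linarith [ha.1] : a + 1 ≠ 0)]
        have := hcomp.tendsto
        rw [show ((fun y : ℝ => y ^ (a+1)) ∘ (fun u : ℝ => u - s)) = fun u : ℝ => (u-s) ^ (a+1) from rfl] at this
        rw [show ((fun u : ℝ => (u-s) ^ (a+1)) s) = 0 from h0] at this
        exact this.mono_left nhdsWithin_le_nhds
      have h2 := h1.const_mul (|a| * s ^ (-(1:ℝ)))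
      simpa using h2
    · -- s < x : plain continuity
      have hx0 : 0 < x := lt_trans hs0 h
      apply ContinuousAt.continuousWithinAt
      have hsub : ContinuousAt (fun u : ℝ => u - s) x :=
        (continuous_id.sub continuous_const).continuousAt
      have h1 : ContinuousAt (fun u : ℝ => (u-s) ^ a) x := by
        have hr := Real.continuousAt_rpow_const (x - s) a (Or.inl (by linarith : x - s ≠ 0))
        exact ContinuousAt.comp (x := x) hr hsub
      have h2 : ContinuousAt (fun u : ℝ => 1 - s ^ (-a) * u ^ a) x := by
        have hr := Real.continuousAt_rpow_const x a (Or.inl hx0.ne')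
        exact continuousAt_const.sub (hr.const_mul _)
      exact h1.mul h2
  -- FTC
  have hint : IntervalIntegrable (fun u : ℝ =>
      a * ((u-s) ^ (a-1) * (1 - s ^ (-a) * u ^ a)) - s ^ (-a) * (a * ((u-s) ^ a * u ^ (a-1))))
      volume s 1 :=
    ((hφ₁.const_mul a)).sub ((hφ₂.const_mul a).const_mul (s ^ (-a)))
  have hftc := intervalIntegral.integral_eq_sub_of_hasDeriv_right_of_le hs1.le hcont
    (fun u hu => (hderiv u hu).hasDerivWithinAt) hint
  rw [hΦ1, hΦs, sub_zero] at hftc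
  rw [intervalIntegral.integral_sub (hφ₁.const_mul a) ((hφ₂.const_mul a).const_mul (s ^ (-a))),
    intervalIntegral.integral_const_mul, intervalIntegral.integral_const_mul,
    intervalIntegral.integral_const_mul] at hftc
  -- assemble
  rw [hcongr, sub_int ha ⟨hs0, hs1⟩] at *
  have hs2a : s ^ (-a) * s ^ (2*a) = s ^ a := by
    rw [← Real.rpow_add hs0]
    congr 1
    ring
  have h2 : s ^ (-a) * (a * (s ^ (2*a) * F a s)) = a * s ^ a * F a s := by
    rw [show s ^ (-a) * (a * (s ^ (2*a) * F a s)) = a * (s ^ (-a) * s ^ (2*a)) * F a s from by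
      ring, hs2a]
  linear_combination (-1:ℝ) * hftc - h2

lemma I_eq (ha : a ∈ Ioo (-(1/2) : ℝ) (1/2)) :
    ∫ s in (0:ℝ)..1, (s ^ (-a) * (1-s) ^ a - a * s ^ a * F a s)^2
      = Real.Gamma (1+a) * Real.Gamma (1-2*a) / ((2*a+1) * Real.Gamma (1-a)) := by
  rcases eq_or_ne a 0 with rfl | ha0
  · norm_num [Real.Gamma_one]
  -- main case
  have ha1 : (0:ℝ) < a + 1 := by linarith [ha.1]
  have h2a1 : (0:ℝ) < 2*a + 1 := by linarith [ha.1]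
  have h12a : (0:ℝ) < 1 - 2*a := by linarith [ha.2]
  have h1a : (0:ℝ) < 1 - a := by linarith [ha.2]
  -- pointwise expansion
  have hcongr : ∫ s in (0:ℝ)..1, (s ^ (-a) * (1-s) ^ a - a * s ^ a * F a s)^2
      = ∫ s in (0:ℝ)..1, (s ^ (-2*a) * (1-s) ^ (2*a)
          - 2*a * ((1-s) ^ a * F a s) + a^2 * (s ^ (2*a) * (F a s)^2)) := by
    refine intervalIntegral.integral_congr_ae ?_
    rw [uIoc_of_le (by norm_num : (0:ℝ) ≤ 1)]
    refine Filter.Eventually.of_forall (fun s hs => ?_)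
    have hs0 : 0 < s := hs.1
    have h1s : (0:ℝ) ≤ 1 - s := by linarith [hs.2]
    have e1 : s ^ (-a) * s ^ (-a) = s ^ (-2*a) := by
      rw [← Real.rpow_add hs0, show -a + -a = -2*a by ring]
    have e2 : (1-s) ^ a * (1-s) ^ a = (1-s) ^ (2*a) := by
      rw [← Real.rpow_add' h1s (show a + a ≠ 0 by intro h; apply ha0; linarith),
        show a + a = 2*a by ring]
    have e3 : s ^ (-a) * s ^ a = 1 := by
      rw [← Real.rpow_add hs0, show -a + a = 0 by ring, Real.rpow_zero]
    have e4 : s ^ a * s ^ a = s ^ (2*a) := by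
      rw [← Real.rpow_add hs0, show a + a = 2*a by ring]
    linear_combination ((1-s) ^ a * (1-s) ^ a) * e1 + (s ^ (-2*a)) * e2
      - (2*a*(1-s) ^ a * F a s) * e3 + (a^2*(F a s)^2) * e4
  rw [hcongr]
  -- split the integral
  have hT1int : IntervalIntegrable (fun s : ℝ => s ^ (-2*a) * (1-s) ^ (2*a)) volume 0 1 :=
    betaInt (by linarith) (by linarith [ha.1])
  have hsub : IntervalIntegrable
      (fun s : ℝ => s ^ (-2*a) * (1-s) ^ (2*a) - 2*a * ((1-s) ^ a * F a s)) volume 0 1 :=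
    hT1int.sub ((intGF ha).const_mul _)
  rw [intervalIntegral.integral_add hsub (((intF2 ha)).const_mul _),
    intervalIntegral.integral_sub hT1int ((intGF ha).const_mul _),
    intervalIntegral.integral_const_mul, intervalIntegral.integral_const_mul]
  have e1 := step_LD ha
  have e2 := step_LE ha
  have e3 := step_LF ha ha0
  have eT1 : ∫ s in (0:ℝ)..1, s ^ (-2*a) * (1-s) ^ (2*a)
      = Real.Gamma (1-2*a) * Real.Gamma (2*a+1) / Real.Gamma 2 := by
    have := betaVal (p := 1-2*a) (q := 2*a+1) h12a (by linarith)
    rw [show 1-2*a-1 = -2*a by ring, show 2*a+1-1 = 2*a by ring,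
      show 1-2*a+(2*a+1) = 2 by ring] at this
    exact this
  have eB1 : ∫ x in (0:ℝ)..1, x ^ (-2*a) * (1-x) ^ a
      = Real.Gamma (1-2*a) * Real.Gamma (a+1) / Real.Gamma (2-a) := by
    have := betaVal (p := 1-2*a) (q := a+1) h12a (by linarith)
    rw [show 1-2*a-1 = -2*a by ring, show a+1-1 = a by ring,
      show 1-2*a+(a+1) = 2-a by ring] at this
    exact this
  have eB2 : ∫ x in (0:ℝ)..1, x ^ (-2*a) * (1-x) ^ (2*a+1)
      = Real.Gamma (1-2*a) * Real.Gamma (2*a+2) / Real.Gamma 3 := by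
    have := betaVal (p := 1-2*a) (q := 2*a+2) h12a (by linarith)
    rw [show 1-2*a-1 = -2*a by ring, show 2*a+2-1 = 2*a+1 by ring,
      show 1-2*a+(2*a+2) = 3 by ring] at this
    exact this
  rw [eB1, eB2] at e3
  rw [eT1]
  set G := ∫ s in (0:ℝ)..1, (1-s) ^ a * F a s with hG
  set T3 := ∫ s in (0:ℝ)..1, s ^ (2*a) * (F a s)^2 with hT3
  set M := ∫ x in (0:ℝ)..1, x ^ (-2*a-1) * (1-x) ^ a * (1 - (1-x) ^ (a+1)) with hM
  have g2 : Real.Gamma 2 = 1 := by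
    rw [show (2:ℝ) = ((1:ℕ):ℝ)+1 by norm_num, Real.Gamma_nat_eq_factorial]
    norm_num
  have g3 : Real.Gamma 3 = 2 := by
    rw [show (3:ℝ) = ((2:ℕ):ℝ)+1 by norm_num, Real.Gamma_nat_eq_factorial]
    norm_num
  have g4 : Real.Gamma (2*a+2) = (2*a+1) * Real.Gamma (2*a+1) := by
    rw [show 2*a+2 = (2*a+1)+1 by ring, Real.Gamma_add_one (by linarith)]
  have g5 : Real.Gamma (2-a) = (1-a) * Real.Gamma (1-a) := by
    rw [show 2-a = (1-a)+1 by ring, Real.Gamma_add_one (by linarith)]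
  have g6 : Real.Gamma (1+a) = Real.Gamma (a+1) := by rw [add_comm]
  have hΓ1 : Real.Gamma (1-2*a) > 0 := Real.Gamma_pos_of_pos h12a
  have hΓ2 : Real.Gamma (2*a+1) > 0 := Real.Gamma_pos_of_pos (by linarith)
  have hΓ3 : Real.Gamma (a+1) > 0 := Real.Gamma_pos_of_pos (by linarith)
  have hΓ4 : Real.Gamma (1-a) > 0 := Real.Gamma_pos_of_pos h1a
  rw [g3, g4, g5] at e3
  rw [g2, g6]
  have hMv : M = ((a-1) * (Real.Gamma (1-2*a) * Real.Gamma (a+1) / ((1-a) * Real.Gamma (1-a)))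
      + 2 * (Real.Gamma (1-2*a) * ((2*a+1) * Real.Gamma (2*a+1)) / 2)) / (2*a) := by
    rw [eq_div_iff (by simpa using ha0 : 2*a ≠ 0)]
    linarith
  have hGv : G = M / (a+1) := by
    rw [eq_div_iff ha1.ne']
    linarith
  have hT3v : T3 = 2 * G / (2*a+1) := by
    rw [eq_div_iff h2a1.ne']
    linarith
  rw [hT3v, hGv, hMv]
  field_simp
  ring

lemma kernel_one {H : ℝ} (hH : H ∈ Set.Ioo (0:ℝ) 1) {s : ℝ} (hs : s ∈ Ioo (0:ℝ) 1) :
    fbmK H 1 s = cH H * (s ^ (-(H-1/2)) * (1-s) ^ (H-1/2)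
      - (H-1/2) * s ^ (H-1/2) * F (H-1/2) s) := by
  have ha : H - 1/2 ∈ Ioo (-(1/2) : ℝ) (1/2) := ⟨by linarith [hH.1], by linarith [hH.2]⟩
  rw [fbmK, if_pos ⟨hs.1, hs.2⟩]
  have h1 : H - 3/2 = (H-1/2) - 1 := by ring
  have h2 : 1/2 - H = -(H-1/2) := by ring
  rw [h1, h2, ← ibp_kernel ha hs]
  ring

lemma kernel_scale {H : ℝ} (hH : H ∈ Set.Ioo (0:ℝ) 1) {t : ℝ} (ht : 0 < t) {x : ℝ}
    (hx : x ∈ Ioo (0:ℝ) 1) :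
    fbmK H t (t*x) = t ^ (H-1/2) * fbmK H 1 x := by
  have hx0 : 0 < x := hx.1
  have hx1 : x < 1 := hx.2
  have htx : 0 < t*x := by positivity
  have htxt : t*x < t := by nlinarith
  rw [fbmK, if_pos ⟨htx, htxt⟩, fbmK, if_pos ⟨hx0, hx1⟩]
  have hterm1 : (t - t*x) ^ (H-1/2) = t ^ (H-1/2) * (1-x) ^ (H-1/2) := by
    rw [show t - t*x = t*(1-x) by ring, Real.mul_rpow ht.le (by linarith)]
  have hint : ∫ u in (t*x)..t, (u - t*x) ^ (H-3/2) * (1 - ((t*x)/u) ^ (1/2-H))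
      = t * (t ^ (H-3/2) * ∫ v in x..1, (v-x) ^ (H-3/2) * (1 - (x/v) ^ (1/2-H))) := by
    have hc := intervalIntegral.integral_comp_mul_left
      (f := fun u : ℝ => (u - t*x) ^ (H-3/2) * (1 - ((t*x)/u) ^ (1/2-H)))
      (a := x) (b := 1) (c := t) ht.ne'
    rw [mul_one] at hc
    have hcong : ∫ v in x..1, (t*v - t*x) ^ (H-3/2) * (1 - ((t*x)/(t*v)) ^ (1/2-H))
        = ∫ v in x..1, t ^ (H-3/2) * ((v-x) ^ (H-3/2) * (1 - (x/v) ^ (1/2-H))) := by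
      refine intervalIntegral.integral_congr (fun v hv => ?_)
      rw [uIcc_of_le hx1.le] at hv
      have hv0 : 0 < v := lt_of_lt_of_le hx0 hv.1
      have e1 : t*v - t*x = t*(v-x) := by ring
      have e2 : (t*(v-x)) ^ (H-3/2) = t ^ (H-3/2) * (v-x) ^ (H-3/2) :=
        Real.mul_rpow ht.le (by linarith [hv.1])
      have e3 : (t*x)/(t*v) = x/v := by
        field_simp
      rw [e1, e2, e3]
      ring
    rw [hcong, intervalIntegral.integral_const_mul] at hc
    rw [hc, smul_eq_mul, ← mul_assoc, mul_inv_cancel₀ ht.ne', one_mul]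
  rw [hterm1, hint]
  have e4 : t * t ^ (H-3/2) = t ^ (H-1/2) := by
    rw [show H-1/2 = (H-3/2)+1 by ring, Real.rpow_add_one ht.ne']
    ring
  calc cH H * (t ^ (H-1/2) * (1-x) ^ (H-1/2))
        + cH H * (1/2-H) * (t * (t ^ (H-3/2) * ∫ v in x..1, (v-x) ^ (H-3/2) * (1 - (x/v) ^ (1/2-H))))
      = cH H * (t ^ (H-1/2) * (1-x) ^ (H-1/2))
        + cH H * (1/2-H) * ((t * t ^ (H-3/2)) * ∫ v in x..1, (v-x) ^ (H-3/2) * (1 - (x/v) ^ (1/2-H))) := by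
        ring
    _ = t ^ (H-1/2) * (cH H * (1-x) ^ (H-1/2)
        + cH H * (1/2-H) * ∫ v in x..1, (v-x) ^ (H-3/2) * (1 - (x/v) ^ (1/2-H))) := by
        rw [e4]; ring


end FbmAux

open FbmAux Real intervalIntegral in
/-- For `H ∈ (0,1)` and `t > 0`, the fBm kernel satisfies `∫_0^t K^H(t,r)² dr = t^{2H}`. -/
theorem stmt_3 (H : ℝ) (hH : H ∈ Set.Ioo (0:ℝ) 1) (t : ℝ) (ht : 0 < t) :
    ∫ r in (0:ℝ)..t, (fbmK H t r) ^ 2 = t ^ (2*H) := by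
  have ha : H - 1/2 ∈ Ioo (-(1/2) : ℝ) (1/2) := ⟨by linarith [hH.1], by linarith [hH.2]⟩
  set a := H - 1/2 with haa
  -- scaling
  have hstep1 : ∫ r in (0:ℝ)..t, (fbmK H t r) ^ 2
      = t * ∫ x in (0:ℝ)..1, (fbmK H t (t*x)) ^ 2 := by
    have hc := intervalIntegral.integral_comp_mul_left
      (f := fun r : ℝ => (fbmK H t r) ^ 2) (a := (0:ℝ)) (b := 1) (c := t) ht.ne'
    rw [mul_one, mul_zero] at hc
    rw [hc, smul_eq_mul, ← mul_assoc]
    field_simp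
  have hstep2 : ∫ x in (0:ℝ)..1, (fbmK H t (t*x)) ^ 2
      = t ^ (2*a) * ∫ x in (0:ℝ)..1, (fbmK H 1 x) ^ 2 := by
    rw [← intervalIntegral.integral_const_mul]
    refine intervalIntegral.integral_congr (fun x hx => ?_)
    rw [uIcc_of_le (by norm_num : (0:ℝ) ≤ 1)] at hx
    rcases eq_or_lt_of_le hx.1 with h0 | h0
    · rw [← h0]
      norm_num
      rw [fbmK, if_neg (by norm_num), fbmK, if_neg (by norm_num)]
      norm_num
    rcases eq_or_lt_of_le hx.2 with h1 | h1
    · rw [h1]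
      rw [fbmK, if_neg (by norm_num), fbmK, if_neg (by simp)]
      norm_num
    · rw [kernel_scale hH ht ⟨h0, h1⟩, mul_pow]
      have : (t ^ a)^2 = t ^ (2*a) := by
        rw [← Real.rpow_natCast (t ^ a) 2, ← Real.rpow_mul ht.le]
        norm_num
        rw [mul_comm]
      rw [this]
  have hstep3 : ∫ x in (0:ℝ)..1, (fbmK H 1 x) ^ 2
      = (cH H)^2 * ∫ s in (0:ℝ)..1, (s ^ (-a) * (1-s) ^ a - a * s ^ a * F a s)^2 := by
    rw [← intervalIntegral.integral_const_mul]
    refine intervalIntegral.integral_congr_ae ?_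
    rw [uIoc_of_le (by norm_num : (0:ℝ) ≤ 1)]
    have hne : ∀ᵐ (x:ℝ) ∂volume, x ≠ (1:ℝ) := by
      refine (MeasureTheory.ae_iff).2 ?_
      simpa using measure_singleton (1:ℝ)
    filter_upwards [hne] with x hx1 hx
    have hxIoo : x ∈ Ioo (0:ℝ) 1 := ⟨hx.1, lt_of_le_of_ne hx.2 hx1⟩
    rw [kernel_one hH hxIoo, mul_pow]
  -- value of c^2
  have hΓ1 : 0 < Real.Gamma (3/2 - H) := Real.Gamma_pos_of_pos (by linarith [hH.2])
  have hΓ2 : 0 < Real.Gamma (H + 1/2) := Real.Gamma_pos_of_pos (by linarith [hH.1])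
  have hΓ3 : 0 < Real.Gamma (2 - 2*H) := Real.Gamma_pos_of_pos (by linarith [hH.2])
  have hc2 : (cH H)^2 = 2*H * Real.Gamma (3/2-H) / (Real.Gamma (H+1/2) * Real.Gamma (2-2*H)) := by
    have harg : 0 < 2*H * Real.Gamma (3/2-H) / (Real.Gamma (H+1/2) * Real.Gamma (2-2*H)) := by
      apply div_pos
      · nlinarith [hΓ1, hH.1]
      · exact mul_pos hΓ2 hΓ3
    rw [cH, sq_sqrt harg.le]
  have hIs : ∫ s in (0:ℝ)..1, (s ^ (-a) * (1-s) ^ a - a * s ^ a * F a s)^2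
      = Real.Gamma (1+a) * Real.Gamma (1-2*a) / ((2*a+1) * Real.Gamma (1-a)) := I_eq ha
  have hcI : (cH H)^2 * ∫ s in (0:ℝ)..1, (s ^ (-a) * (1-s) ^ a - a * s ^ a * F a s)^2 = 1 := by
    rw [hIs, hc2]
    rw [show (1:ℝ)+a = H+1/2 by rw [haa]; ring, show 1-2*a = 2-2*H by rw [haa]; ring,
      show 2*a+1 = 2*H by rw [haa]; ring, show 1-a = 3/2-H by rw [haa]; ring]
    have hne : Real.Gamma (H+1/2) * Real.Gamma (2-2*H) * (2*H*Real.Gamma (3/2-H)) ≠ 0 :=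
      (mul_pos (mul_pos hΓ2 hΓ3)
        (mul_pos (show (0:ℝ) < 2*H by linarith [hH.1]) hΓ1)).ne'
    rw [div_mul_div_comm, div_eq_one_iff_eq hne]
    ring
  rw [hstep1, hstep2, hstep3, hcI, mul_one]
  rw [show 2*H = (2*a)+1 by rw [haa]; ring, Real.rpow_add_one ht.ne']
  ring
end

section
/- Let H ∈ (0,1) with H ≠ 1/2, let 0 < t < T, and let φ : [0,T] → ℝ be Lipschitz continuous. Then for every s ∈ (0,T) with s ≠ t, (K_T^* (1_{[0,t]} φ))(s) = 1_{[0,t]}(s) · (K_t^* φ)(s), where 1_{[0,t]} is the indicator function of [0,t]. -/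
open MeasureTheory Set

/-- The derivative `∂K^H/∂t (t,s) = c_H (H - 1/2)(t-s)^{H-3/2}(s/t)^{1/2-H}` of the
fractional Brownian motion kernel in its first variable. -/
noncomputable def fbmdK (H t s : ℝ) : ℝ :=
  cH H * (H - 1/2) * (t - s) ^ (H - 3/2) * (s / t) ^ (1/2 - H)

/-! ### Auxiliary lemmas -/

lemma rpow_shift_intervalIntegrable (q s b : ℝ) (hq : -1 < q) :
    IntervalIntegrable (fun u : ℝ => (u - s) ^ q) volume s b := by
  have h := (intervalIntegral.intervalIntegrable_rpow' (a := 0) (b := b - s) hq).comp_sub_right s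
  simpa using h

lemma one_sub_rpow_bound (a s b : ℝ) (hs : 0 < s) (hb : s < b) :
    ∃ C, 0 ≤ C ∧ ∀ u ∈ Icc s b, |1 - (s / u) ^ a| ≤ C * (u - s) := by
  set g' : ℝ → ℝ := fun u => s * -(u ^ 2)⁻¹ * a * (s / u) ^ (a - 1) with hg'
  have hderiv : ∀ u ∈ Icc s b, HasDerivAt (fun u : ℝ => (s / u) ^ a) (g' u) u := by
    intro u hu
    have hu0 : u ≠ 0 := (hs.trans_le hu.1).ne'
    have h1 : HasDerivAt (fun u : ℝ => s / u) (s * -(u ^ 2)⁻¹) u := by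
      simpa [div_eq_mul_inv] using (hasDerivAt_inv hu0).const_mul s
    exact h1.rpow_const (Or.inl (div_ne_zero hs.ne' hu0))
  have hcont : ContinuousOn g' (Icc s b) := by
    have hne : ∀ u ∈ Icc s b, u ≠ 0 := fun u hu => (hs.trans_le hu.1).ne'
    apply ContinuousOn.mul
    · apply ContinuousOn.mul
      · exact continuousOn_const.mul
          (((continuousOn_id.pow 2).inv₀ fun u hu => pow_ne_zero _ (hne u hu)).neg)
      · exact continuousOn_const
    · exact (continuousOn_const.div continuousOn_id hne).rpow_const
        fun u hu => Or.inl (div_ne_zero hs.ne' (hne u hu))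
  obtain ⟨C, hC⟩ := isCompact_Icc.exists_bound_of_continuousOn hcont
  refine ⟨max C 0, le_max_right _ _, fun u hu => ?_⟩
  have hmem_s : s ∈ Icc s b := left_mem_Icc.mpr hb.le
  have key := (convex_Icc s b).norm_image_sub_le_of_norm_hasDerivWithin_le
    (fun x hx => (hderiv x hx).hasDerivWithinAt)
    (fun x hx => (hC x hx).trans (le_max_left C (0:ℝ))) hmem_s hu
  have hss : (s / s : ℝ) ^ a = 1 := by rw [div_self hs.ne', Real.one_rpow]
  calc |1 - (s / u) ^ a| = ‖(s / u) ^ a - (s / s) ^ a‖ := by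
        rw [hss, Real.norm_eq_abs, abs_sub_comm]
    _ ≤ max C 0 * ‖u - s‖ := key
    _ = max C 0 * (u - s) := by
        rw [Real.norm_eq_abs, abs_of_nonneg (sub_nonneg.mpr hu.1)]

lemma contOn_inner (H s : ℝ) (hs : 0 < s) :
    ContinuousOn (fun u : ℝ => (u - s) ^ (H - 3/2) * (1 - (s / u) ^ (1/2 - H))) (Ioi s) := by
  apply ContinuousOn.mul
  · exact (continuous_id.sub continuous_const).continuousOn.rpow_const
      fun u hu => Or.inl (sub_ne_zero.mpr (ne_of_gt hu))
  · exact continuousOn_const.sub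
      ((continuousOn_const.div continuousOn_id fun u hu => (hs.trans hu).ne').rpow_const
        fun u hu => Or.inl (div_ne_zero hs.ne' (hs.trans hu).ne'))

lemma rpow_merge {x : ℝ} (hx : 0 < x) (H : ℝ) :
    x ^ (H - 3/2) * x = x ^ (H - 1/2) := by
  have h := Real.rpow_add hx (H - 3/2) 1
  rw [Real.rpow_one] at h
  rw [← h]
  congr 1
  ring

lemma inner_intervalIntegrable (H s b : ℝ) (hH : 0 < H) (hs : 0 < s) (hb : s < b) :
    IntervalIntegrable (fun u : ℝ => (u - s) ^ (H - 3/2) * (1 - (s / u) ^ (1/2 - H)))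
      volume s b := by
  obtain ⟨C, hC0, hC⟩ := one_sub_rpow_bound (1/2 - H) s b hs hb
  rw [intervalIntegrable_iff_integrableOn_Ioc_of_le hb.le]
  have hmeas : AEStronglyMeasurable
      (fun u : ℝ => (u - s) ^ (H - 3/2) * (1 - (s / u) ^ (1/2 - H)))
      (volume.restrict (Ioc s b)) :=
    ((contOn_inner H s hs).mono Ioc_subset_Ioi_self).aestronglyMeasurable measurableSet_Ioc
  have hdom : IntegrableOn (fun u : ℝ => C * (u - s) ^ (H - 1/2)) (Ioc s b) := by
    rw [← intervalIntegrable_iff_integrableOn_Ioc_of_le hb.le]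
    exact (rpow_shift_intervalIntegrable (H - 1/2) s b (by linarith)).const_mul C
  refine Integrable.mono' hdom hmeas ?_
  filter_upwards [ae_restrict_mem measurableSet_Ioc] with u hu
  have hus : 0 < u - s := sub_pos.mpr hu.1
  have h1 : |1 - (s / u) ^ (1/2 - H)| ≤ C * (u - s) := hC u ⟨hu.1.le, hu.2⟩
  rw [Real.norm_eq_abs, abs_mul, abs_of_nonneg (Real.rpow_nonneg hus.le _)]
  calc (u - s) ^ (H - 3/2) * |1 - (s / u) ^ (1/2 - H)|
      ≤ (u - s) ^ (H - 3/2) * (C * (u - s)) :=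
        mul_le_mul_of_nonneg_left h1 (Real.rpow_nonneg hus.le _)
    _ = C * ((u - s) ^ (H - 3/2) * (u - s)) := by ring
    _ = C * (u - s) ^ (H - 1/2) := by rw [rpow_merge hus]

lemma contOn_fbmdK (H s c : ℝ) (hs : 0 < s) :
    ContinuousOn (fun r : ℝ => fbmdK H r s) (Ioi s) := by
  simp only [fbmdK]
  apply ContinuousOn.mul
  · apply ContinuousOn.mul
    · exact continuousOn_const
    · exact (continuous_id.sub continuous_const).continuousOn.rpow_const
        fun r hr => Or.inl (sub_ne_zero.mpr (ne_of_gt hr))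
  · exact (continuousOn_const.div continuousOn_id fun r hr => (hs.trans hr).ne').rpow_const
      fun r hr => Or.inl (div_ne_zero hs.ne' (hs.trans hr).ne')

lemma fbm_ftc (H : ℝ) (hH : 0 < H) (s t T : ℝ) (hs : 0 < s) (hst : s < t) (htT : t ≤ T) :
    (∫ r in t..T, fbmdK H r s) = fbmK H T s - fbmK H t s := by
  apply intervalIntegral.integral_eq_sub_of_hasDerivAt
  · intro τ hτ
    rw [uIcc_of_le htT] at hτ
    have hsτ : s < τ := hst.trans_le hτ.1
    have hF : HasDerivAt
        (fun x => ∫ u in s..x, (u - s) ^ (H - 3/2) * (1 - (s / u) ^ (1/2 - H)))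
        ((τ - s) ^ (H - 3/2) * (1 - (s / τ) ^ (1/2 - H))) τ := by
      apply intervalIntegral.integral_hasDerivAt_right
        (inner_intervalIntegrable H s τ hH hs hsτ)
      · exact ContinuousOn.stronglyMeasurableAtFilter isOpen_Ioi (contOn_inner H s hs) τ hsτ
      · exact (contOn_inner H s hs).continuousAt (Ioi_mem_nhds hsτ)
    have h1 : HasDerivAt (fun x : ℝ => (x - s) ^ (H - 1/2))
        (1 * (H - 1/2) * (τ - s) ^ (H - 1/2 - 1)) τ :=
      ((hasDerivAt_id τ).sub_const s).rpow_const (Or.inl (sub_ne_zero.mpr hsτ.ne'))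
    have h2 := (h1.const_mul (cH H)).add (hF.const_mul (cH H * (1/2 - H)))
    have hev : (fun x => fbmK H x s) =ᶠ[nhds τ]
        (fun x => cH H * (x - s) ^ (H - 1/2) +
          cH H * (1/2 - H) * ∫ u in s..x, (u - s) ^ (H - 3/2) * (1 - (s / u) ^ (1/2 - H))) := by
      filter_upwards [Ioi_mem_nhds hsτ] with x hx
      rw [fbmK, if_pos ⟨hs, hx⟩]
    have h3 := h2.congr_of_eventuallyEq hev
    convert h3 using 1
    rw [fbmdK]
    have he : H - 1/2 - 1 = H - 3/2 := by ring
    rw [he]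
    ring
  · exact ((contOn_fbmdK H s 0 hs).mono
      (fun r hr => hst.trans_le ((uIcc_of_le htT ▸ hr).1))).intervalIntegrable

lemma outer_intervalIntegrable (H : ℝ) (hH : 0 < H) (s t T : ℝ) (hs : 0 < s) (hst : s < t)
    (htT : t ≤ T) (φ : ℝ → ℝ) (L : NNReal) (hφ : LipschitzOnWith L φ (Set.Icc 0 T)) :
    IntervalIntegrable (fun r => (φ r - φ s) * fbmdK H r s) volume s t := by
  have hcontB : ContinuousOn (fun r : ℝ => (s / r) ^ (1/2 - H)) (Icc s t) :=
    (continuousOn_const.div continuousOn_id fun r hr => (hs.trans_le hr.1).ne').rpow_const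
      fun r hr => Or.inl (div_ne_zero hs.ne' (hs.trans_le hr.1).ne')
  obtain ⟨B, hB⟩ := isCompact_Icc.exists_bound_of_continuousOn hcontB
  rw [intervalIntegrable_iff_integrableOn_Ioc_of_le hst.le]
  set C : ℝ := (L : ℝ) * (|cH H * (H - 1/2)| * max B 0) with hCdef
  have hmemT : ∀ r ∈ Icc s t, r ∈ Icc (0:ℝ) T := fun r hr =>
    ⟨hs.le.trans hr.1, hr.2.trans htT⟩
  have hmeas : AEStronglyMeasurable (fun r => (φ r - φ s) * fbmdK H r s)
      (volume.restrict (Ioc s t)) := by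
    apply ContinuousOn.aestronglyMeasurable _ measurableSet_Ioc
    apply ContinuousOn.mul
    · exact ((hφ.continuousOn.mono fun r hr => hmemT r ⟨hr.1.le, hr.2⟩).sub continuousOn_const)
    · exact (contOn_fbmdK H s 0 hs).mono Ioc_subset_Ioi_self
  have hdom : IntegrableOn (fun r : ℝ => C * (r - s) ^ (H - 1/2)) (Ioc s t) := by
    rw [← intervalIntegrable_iff_integrableOn_Ioc_of_le hst.le]
    exact (rpow_shift_intervalIntegrable (H - 1/2) s t (by linarith)).const_mul C
  refine Integrable.mono' hdom hmeas ?_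
  filter_upwards [ae_restrict_mem measurableSet_Ioc] with r hr
  have hrs : 0 < r - s := sub_pos.mpr hr.1
  have hφr : |φ r - φ s| ≤ (L : ℝ) * (r - s) := by
    have h := hφ.dist_le_mul r (hmemT r ⟨hr.1.le, hr.2⟩)
      s (hmemT s ⟨le_refl s, hst.le⟩)
    rw [Real.dist_eq, Real.dist_eq, abs_of_pos hrs] at h
    exact h
  have hBr : |(s / r) ^ (1/2 - H)| ≤ max B 0 :=
    (hB r ⟨hr.1.le, hr.2⟩).trans (le_max_left _ _)
  rw [Real.norm_eq_abs]
  calc |(φ r - φ s) * fbmdK H r s|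
      = |φ r - φ s| * (|cH H * (H - 1/2)| * ((r - s) ^ (H - 3/2) * |(s / r) ^ (1/2 - H)|)) := by
        rw [fbmdK, abs_mul, abs_mul, abs_mul,
          abs_of_nonneg (Real.rpow_nonneg hrs.le (H - 3/2))]
        ring
    _ ≤ ((L : ℝ) * (r - s)) *
          (|cH H * (H - 1/2)| * ((r - s) ^ (H - 3/2) * max B 0)) := by
        have h0 : (0:ℝ) ≤ (r - s) ^ (H - 3/2) := Real.rpow_nonneg hrs.le _
        gcongr
    _ = C * ((r - s) ^ (H - 3/2) * (r - s)) := by rw [hCdef]; ring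
    _ = C * (r - s) ^ (H - 1/2) := by rw [rpow_merge hrs]

/-- For `H ∈ (0,1)`, `H ≠ 1/2`, `0 < t < T`, a Lipschitz function `φ` on `[0,T]`, and
`s ∈ (0,T)` with `s ≠ t`, one has `(K_T^* (1_{[0,t]} φ))(s) = 1_{[0,t]}(s) (K_t^* φ)(s)`,
where `(K_τ^* ψ)(s) = ψ(s) K^H(τ,s) + ∫_s^τ (ψ(r) - ψ(s)) ∂K^H/∂r (r,s) dr`. -/
theorem stmt_11 (H : ℝ) (hH : H ∈ Set.Ioo (0:ℝ) 1) (hH' : H ≠ 1/2)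
    (t T : ℝ) (ht : 0 < t) (htT : t < T)
    (φ : ℝ → ℝ) (L : NNReal) (hφ : LipschitzOnWith L φ (Set.Icc 0 T))
    (s : ℝ) (hs : s ∈ Set.Ioo 0 T) (hst : s ≠ t) :
    (Set.Icc (0:ℝ) t).indicator 1 s * φ s * fbmK H T s +
        (∫ r in s..T,
          ((Set.Icc (0:ℝ) t).indicator 1 r * φ r -
            (Set.Icc (0:ℝ) t).indicator 1 s * φ s) * fbmdK H r s) =
      (Set.Icc (0:ℝ) t).indicator 1 s *
        (φ s * fbmK H t s + ∫ r in s..t, (φ r - φ s) * fbmdK H r s) := by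
  have hs0 : 0 < s := hs.1
  rcases lt_or_gt_of_ne hst with hlt | hgt
  · -- case s < t
    have hmem : s ∈ Icc (0:ℝ) t := ⟨hs0.le, hlt.le⟩
    rw [Set.indicator_of_mem hmem]
    simp only [Pi.one_apply, one_mul]
    have hIn : IntervalIntegrable (fun r => (φ r - φ s) * fbmdK H r s) volume s t :=
      outer_intervalIntegrable H hH.1 s t T hs0 hlt htT.le φ L hφ
    have heq : EqOn (fun r => (φ r - φ s) * fbmdK H r s)
        (fun r => ((Icc (0:ℝ) t).indicator 1 r * φ r - φ s) * fbmdK H r s) (Ioc s t) := by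
      intro r hr
      have hmr : r ∈ Icc (0:ℝ) t := ⟨(hs0.trans hr.1).le, hr.2⟩
      simp [Set.indicator_of_mem hmr]
    have hI1 : IntervalIntegrable
        (fun r => ((Icc (0:ℝ) t).indicator 1 r * φ r - φ s) * fbmdK H r s) volume s t := by
      rw [intervalIntegrable_iff_integrableOn_Ioc_of_le hlt.le] at hIn ⊢
      exact hIn.congr_fun heq measurableSet_Ioc
    have hI2 : IntervalIntegrable
        (fun r => ((Icc (0:ℝ) t).indicator 1 r * φ r - φ s) * fbmdK H r s) volume t T := by
      have hc : IntervalIntegrable (fun r => (0 - φ s) * fbmdK H r s) volume t T :=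
        (continuousOn_const.mul ((contOn_fbmdK H s 0 hs0).mono
          (fun r hr => hlt.trans_le ((uIcc_of_le htT.le ▸ hr).1)))).intervalIntegrable
      rw [intervalIntegrable_iff_integrableOn_Ioc_of_le htT.le] at hc ⊢
      apply hc.congr_fun _ measurableSet_Ioc
      intro r hr
      have hmr : r ∉ Icc (0:ℝ) t := fun hm => absurd hm.2 (not_le.mpr hr.1)
      simp [Set.indicator_of_notMem hmr]
    rw [← intervalIntegral.integral_add_adjacent_intervals hI1 hI2]
    have e1 : (∫ r in s..t, ((Icc (0:ℝ) t).indicator 1 r * φ r - φ s) * fbmdK H r s)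
        = ∫ r in s..t, (φ r - φ s) * fbmdK H r s := by
      apply intervalIntegral.integral_congr_ae
      rw [uIoc_of_le hlt.le]
      filter_upwards with r hr
      have hmr : r ∈ Icc (0:ℝ) t := ⟨(hs0.trans hr.1).le, hr.2⟩
      simp [Set.indicator_of_mem hmr]
    have e2 : (∫ r in t..T, ((Icc (0:ℝ) t).indicator 1 r * φ r - φ s) * fbmdK H r s)
        = ∫ r in t..T, (0 - φ s) * fbmdK H r s := by
      apply intervalIntegral.integral_congr_ae
      rw [uIoc_of_le htT.le]
      filter_upwards with r hr
      have hmr : r ∉ Icc (0:ℝ) t := fun hm => absurd hm.2 (not_le.mpr hr.1)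
      simp [Set.indicator_of_notMem hmr]
    rw [e1, e2, intervalIntegral.integral_const_mul,
      fbm_ftc H hH.1 s t T hs0 hlt htT.le]
    ring
  · -- case t < s
    have hnmem : s ∉ Icc (0:ℝ) t := fun hm => absurd hm.2 (not_le.mpr hgt)
    rw [Set.indicator_of_notMem hnmem]
    have e0 : (∫ r in s..T,
        ((Icc (0:ℝ) t).indicator 1 r * φ r - 0 * φ s) * fbmdK H r s) = ∫ r in s..T, (0:ℝ) := by
      apply intervalIntegral.integral_congr_ae
      rw [uIoc_of_le hs.2.le]
      filter_upwards with r hr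
      have hmr : r ∉ Icc (0:ℝ) t := fun hm => absurd hm.2 (not_le.mpr (hgt.trans hr.1))
      simp [Set.indicator_of_notMem hmr]
    rw [e0]
    simp
end

section
/- Let H ∈ (1/2, 1) and 0 < v < u. Then ∫_0^v ∂K^H/∂u (u,s) · ∂K^H/∂v (v,s) ds = c_H² (H − 1/2)² B(2 − 2H, H − 1/2) (u − v)^{2H − 2}, where B denotes the Beta function. Equivalently, (uv)^{H−1/2} ∫_0^v (u−s)^{H−3/2} (v−s)^{H−3/2} s^{1−2H} ds = B(2−2H, H−1/2) (u−v)^{2H−2}. -/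
open MeasureTheory Set

/-- The Beta function `B(x,y) = Γ(x)Γ(y)/Γ(x+y)`. -/
noncomputable def realBeta (x y : ℝ) : ℝ :=
  Real.Gamma x * Real.Gamma y / Real.Gamma (x + y)

open intervalIntegral in
lemma realBeta_eq (a b : ℝ) (ha : 0 < a) (hb : 0 < b) :
    ∫ x in (0:ℝ)..1, x ^ (a-1) * (1-x) ^ (b-1) =
      Real.Gamma a * Real.Gamma b / Real.Gamma (a+b) := by
  have h := Complex.Gamma_mul_Gamma_eq_betaIntegral (s := (a:ℂ)) (t := (b:ℂ))
    (by simpa using ha) (by simpa using hb)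
  have hcast : Complex.betaIntegral (a:ℂ) (b:ℂ)
      = ((∫ x in (0:ℝ)..1, x ^ (a-1) * (1-x) ^ (b-1) : ℝ) : ℂ) := by
    rw [Complex.betaIntegral, ← intervalIntegral.integral_ofReal]
    apply intervalIntegral.integral_congr
    intro x hx
    rw [uIcc_of_le (by norm_num)] at hx
    have e1 : ((a:ℂ) - 1) = ((a-1 : ℝ) : ℂ) := by push_cast; ring
    have e2 : ((b:ℂ) - 1) = ((b-1 : ℝ) : ℂ) := by push_cast; ring
    have e3 : (1 - (x:ℂ)) = ((1 - x : ℝ) : ℂ) := by push_cast; ring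
    simp only [e1, e2, e3]
    rw [← Complex.ofReal_cpow hx.1, ← Complex.ofReal_cpow (by linarith [hx.2])]
    push_cast; ring
  rw [hcast] at h
  have hG : Real.Gamma (a+b) ≠ 0 := (Real.Gamma_pos_of_pos (by linarith)).ne'
  rw [← Complex.ofReal_add, Complex.Gamma_ofReal, Complex.Gamma_ofReal, Complex.Gamma_ofReal,
    ← Complex.ofReal_mul, ← Complex.ofReal_mul] at h
  have := Complex.ofReal_injective h
  field_simp
  linarith [this]

lemma key (H u v : ℝ) (hH : H ∈ Set.Ioo (1/2:ℝ) 1) (hv : 0 < v) (hvu : v < u) :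
    (∫ s in Ioo (0:ℝ) v, (u-s)^(H-3/2)*(v-s)^(H-3/2)*s^(1-2*H))
    = realBeta (2-2*H) (H-1/2) * ((u*v)^((1:ℝ)/2-H) * (u-v)^(2*H-2)) := by
  obtain ⟨hH12, hH1⟩ := hH
  have hu : 0 < u := hv.trans hvu
  have huv : 0 < u - v := by linarith
  set φ : ℝ → ℝ := fun x => u*v*(1-x)/(u-x*v) with hφ
  set φ' : ℝ → ℝ := fun x => -(u*v*(u-v))/(u-x*v)^2 with hφ'
  have hD : ∀ x : ℝ, x < 1 → 0 < u - x*v := by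
    intro x hx; nlinarith
  -- image
  have himg : φ '' Ioo 0 1 = Ioo 0 v := by
    ext s
    constructor
    · rintro ⟨x, ⟨hx0, hx1⟩, rfl⟩
      have hDx := hD x hx1
      constructor
      · apply div_pos _ hDx
        have h1x : (0:ℝ) < 1 - x := by linarith
        positivity
      · rw [div_lt_iff₀ hDx]
        nlinarith [mul_pos (mul_pos hx0 hv) huv]
    · rintro ⟨hs0, hsv⟩
      have hus : 0 < u - s := by linarith
      have hvs : 0 < v - s := by linarith
      refine ⟨u*(v-s)/(v*(u-s)), ⟨by positivity, ?_⟩, ?_⟩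
      · rw [div_lt_one (by positivity)]; nlinarith [mul_pos hs0 huv]
      · simp only [hφ]
        rw [div_eq_iff (hD _ (by rw [div_lt_one (by positivity)]; nlinarith [mul_pos hs0 huv])).ne']
        field_simp
        ring
  -- derivative
  have hderiv : ∀ x ∈ Ioo (0:ℝ) 1, HasDerivWithinAt φ (φ' x) (Ioo 0 1) x := by
    rintro x ⟨hx0, hx1⟩
    have hDx := hD x hx1
    have hnum : HasDerivAt (fun y : ℝ => u*v*(1-y)) (-(u*v)) x := by
      have := (hasDerivAt_const x (1:ℝ)).sub (hasDerivAt_id x)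
      simpa using this.const_mul (u*v)
    have hden : HasDerivAt (fun y : ℝ => u - y*v) (-v) x := by
      have := ((hasDerivAt_id x).mul_const v).const_sub u
      simpa using this
    have h := hnum.div hden hDx.ne'
    have : HasDerivAt φ (φ' x) x := by
      refine h.congr_deriv ?_
      simp only [hφ']
      field_simp
      ring
    exact this.hasDerivWithinAt
  -- injectivity
  have hinj : InjOn φ (Ioo 0 1) := by
    rintro x ⟨hx0, hx1⟩ y ⟨hy0, hy1⟩ hxy
    have hDx := hD x hx1
    have hDy := hD y hy1
    simp only [hφ] at hxy
    rw [div_eq_div_iff hDx.ne' hDy.ne'] at hxy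
    have h0 : u*v*(u-v)*(y-x) = 0 := by linear_combination hxy
    have : u*v*(u-v) ≠ 0 := by positivity
    rcases mul_eq_zero.mp h0 with h' | h'
    · exact absurd h' this
    · linarith
  rw [← himg, MeasureTheory.integral_image_eq_integral_abs_deriv_smul measurableSet_Ioo hderiv hinj]
  -- pointwise rewrite
  have hpt : ∀ x ∈ Ioo (0:ℝ) 1,
      |φ' x| • ((u - φ x)^(H-3/2)*(v - φ x)^(H-3/2)*(φ x)^(1-2*H))
      = ((u*v)^((1:ℝ)/2-H) * (u-v)^(2*H-2)) * (x^((H-1/2)-1) * (1-x)^((2-2*H)-1)) := by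
    rintro x ⟨hx0, hx1⟩
    have hDx := hD x hx1
    have h1x : (0:ℝ) < 1 - x := by linarith
    have e1 : u - φ x = u*(u-v)/(u-x*v) := by
      simp only [hφ]; rw [eq_div_iff hDx.ne', sub_mul, div_mul_cancel₀ _ hDx.ne']; ring
    have e2 : v - φ x = v*x*(u-v)/(u-x*v) := by
      simp only [hφ]; rw [eq_div_iff hDx.ne', sub_mul, div_mul_cancel₀ _ hDx.ne']; ring
    have e3 : φ x = u*v*(1-x)/(u-x*v) := rfl
    have e4 : |φ' x| = u*v*(u-v)/(u-x*v)^2 := by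
      simp only [hφ']
      rw [abs_div, abs_neg, abs_of_pos (by positivity), abs_of_pos (by positivity)]
    rw [smul_eq_mul, e1, e2, e3, e4]
    rw [Real.div_rpow (by positivity) hDx.le, Real.div_rpow (by positivity) hDx.le,
      Real.div_rpow (by positivity) hDx.le,
      Real.mul_rpow (by positivity) huv.le,
      Real.mul_rpow (by positivity) huv.le, Real.mul_rpow hv.le hx0.le,
      Real.mul_rpow (by positivity) h1x.le, Real.mul_rpow hu.le hv.le,
      Real.mul_rpow hu.le hv.le]
    -- now combine exponents
    have cu : u ^ (H-3/2) * u ^ (1-2*H) * u = u ^ ((1:ℝ)/2-H) := by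
      rw [← Real.rpow_add hu, ← Real.rpow_add_one hu.ne']
      congr 1; ring
    have cv : v ^ (H-3/2) * v ^ (1-2*H) * v = v ^ ((1:ℝ)/2-H) := by
      rw [← Real.rpow_add hv, ← Real.rpow_add_one hv.ne']
      congr 1; ring
    have cuv : (u-v) ^ (H-3/2) * (u-v) ^ (H-3/2) * (u-v) = (u-v) ^ (2*H-2) := by
      rw [← Real.rpow_add huv, ← Real.rpow_add_one huv.ne']
      congr 1; ring
    have cD : (u-x*v) ^ (H-3/2) * (u-x*v) ^ (H-3/2) * (u-x*v) ^ (1-2*H) = ((u-x*v)^2)⁻¹ := by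
      rw [← Real.rpow_add hDx, ← Real.rpow_add hDx]
      rw [show (H-3/2) + (H-3/2) + (1-2*H) = (-2 : ℝ) by ring]
      rw [show ((-2:ℝ)) = -((2:ℕ):ℝ) by norm_num, Real.rpow_neg hDx.le, Real.rpow_natCast]
    have hex : (H-1/2) - 1 = H - 3/2 := by ring
    have hex2 : (2-2*H) - 1 = 1-2*H := by ring
    rw [hex, hex2]
    have hD1 : (u-x*v:ℝ)^(H-3/2) ≠ 0 := by positivity
    have hD2 : (u-x*v:ℝ)^(1-2*H) ≠ 0 := by positivity
    have cD' : (u-x*v)^(H-3/2) * (u-x*v)^(H-3/2) * (u-x*v)^(1-2*H) * (u-x*v)^2 = 1 := by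
      rw [cD]
      field_simp
    rw [← cu, ← cv, ← cuv]
    rw [div_mul_div_comm, div_mul_div_comm, div_mul_div_comm,
      show (u-x*v)^2 * ((u-x*v)^(H-3/2) * (u-x*v)^(H-3/2) * (u-x*v)^(1-2*H)) = 1 by rw [mul_comm]; exact cD',
      div_one]
    ring
  rw [MeasureTheory.setIntegral_congr_fun measurableSet_Ioo hpt]
  rw [MeasureTheory.integral_const_mul]
  have hbeta : ∫ x in Ioo (0:ℝ) 1, x ^ ((H-1/2)-1) * (1-x) ^ ((2-2*H)-1)
      = realBeta (H-1/2) (2-2*H) := by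
    rw [← MeasureTheory.integral_Ioc_eq_integral_Ioo,
      ← intervalIntegral.integral_of_le zero_le_one]
    exact realBeta_eq _ _ (by linarith) (by linarith)
  rw [hbeta]
  have : realBeta (H-1/2) (2-2*H) = realBeta (2-2*H) (H-1/2) := by
    unfold realBeta
    rw [show (H-1/2)+(2-2*H) = (2-2*H)+(H-1/2) by ring]
    ring
  rw [this]
  ring


/-- For `H ∈ (1/2,1)` and `0 < v < u`,
`∫_0^v ∂K^H/∂u(u,s) ∂K^H/∂v(v,s) ds = c_H² (H-1/2)² B(2-2H, H-1/2) (u-v)^{2H-2}`;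
equivalently `(uv)^{H-1/2} ∫_0^v (u-s)^{H-3/2}(v-s)^{H-3/2} s^{1-2H} ds
= B(2-2H, H-1/2)(u-v)^{2H-2}`. -/

theorem stmt_12 (H : ℝ) (hH : H ∈ Set.Ioo (1/2 : ℝ) 1) (u v : ℝ) (hv : 0 < v) (hvu : v < u) :
    (∫ s in (0:ℝ)..v, fbmdK H u s * fbmdK H v s =
      cH H ^ 2 * (H - 1/2) ^ 2 * realBeta (2 - 2*H) (H - 1/2) * (u - v) ^ (2*H - 2)) ∧
    ((u * v) ^ (H - 1/2) *
        ∫ s in (0:ℝ)..v, (u - s) ^ (H - 3/2) * (v - s) ^ (H - 3/2) * s ^ (1 - 2*H)) =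
      realBeta (2 - 2*H) (H - 1/2) * (u - v) ^ (2*H - 2) := by
  obtain ⟨hH12, hH1⟩ := hH
  have hu : 0 < u := hv.trans hvu
  have huv0 : (0:ℝ) < u * v := by positivity
  have hone : (u*v)^(H-1/2) * (u*v)^((1:ℝ)/2-H) = 1 := by
    rw [← Real.rpow_add huv0, show (H-1/2) + ((1:ℝ)/2-H) = 0 by ring, Real.rpow_zero]
  have hkey := key H u v ⟨hH12, hH1⟩ hv hvu
  constructor
  · have hcong : ∀ s ∈ Ioo (0:ℝ) v, fbmdK H u s * fbmdK H v s
        = (cH H ^ 2 * (H - 1/2) ^ 2 * (u*v)^(H-1/2)) *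
          ((u-s)^(H-3/2)*(v-s)^(H-3/2)*s^(1-2*H)) := by
      rintro s ⟨hs0, hsv⟩
      have hsu2 : s ^ ((1:ℝ)/2-H) * s ^ ((1:ℝ)/2-H) = s ^ (1-2*H) := by
        rw [← Real.rpow_add hs0]
        congr 1; ring
      have hmul : (s/u) ^ (1/2-H) * (s/v) ^ (1/2-H) = (u*v)^(H-1/2) * s^(1-2*H) := by
        rw [Real.div_rpow hs0.le hu.le, Real.div_rpow hs0.le hv.le,
          show (H-1/2 : ℝ) = -(1/2-H) by ring, Real.rpow_neg huv0.le,
          Real.mul_rpow hu.le hv.le, div_mul_div_comm, hsu2]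
        have h1 : u ^ ((1:ℝ)/2-H) ≠ 0 := by positivity
        have h2 : v ^ ((1:ℝ)/2-H) ≠ 0 := by positivity
        field_simp
      simp only [fbmdK]
      calc cH H * (H - 1/2) * (u - s) ^ (H - 3/2) * (s/u) ^ (1/2 - H) *
            (cH H * (H - 1/2) * (v - s) ^ (H - 3/2) * (s/v) ^ (1/2 - H))
          = cH H ^ 2 * (H - 1/2) ^ 2 * ((s/u) ^ (1/2-H) * (s/v) ^ (1/2-H)) *
              ((u-s)^(H-3/2)*(v-s)^(H-3/2)) := by ring
        _ = _ := by rw [hmul]; ring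
    rw [intervalIntegral.integral_of_le hv.le, MeasureTheory.integral_Ioc_eq_integral_Ioo,
      MeasureTheory.setIntegral_congr_fun measurableSet_Ioo hcong,
      MeasureTheory.integral_const_mul, hkey]
    calc cH H ^ 2 * (H - 1/2) ^ 2 * (u*v)^(H-1/2) *
          (realBeta (2-2*H) (H-1/2) * ((u*v)^((1:ℝ)/2-H) * (u-v)^(2*H-2)))
        = cH H ^ 2 * (H - 1/2) ^ 2 * realBeta (2-2*H) (H-1/2) * (u-v)^(2*H-2) *
            ((u*v)^(H-1/2) * (u*v)^((1:ℝ)/2-H)) := by ring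
      _ = _ := by rw [hone, mul_one]
  · rw [intervalIntegral.integral_of_le hv.le, MeasureTheory.integral_Ioc_eq_integral_Ioo,
      hkey]
    calc (u*v)^(H-1/2) * (realBeta (2-2*H) (H-1/2) * ((u*v)^((1:ℝ)/2-H) * (u-v)^(2*H-2)))
        = realBeta (2-2*H) (H-1/2) * (u-v)^(2*H-2) *
            ((u*v)^(H-1/2) * (u*v)^((1:ℝ)/2-H)) := by ring
      _ = _ := by rw [hone, mul_one]
end

section
/- Let H ∈ (1/2, 1), T > 0, and let φ, ψ : [0,T] → ℝ be continuous. Then ∫_0^T ∫_0^T φ(u) ψ(v) ( ∫_0^{min(u,v)} ∂K^H/∂u (u,s) · ∂K^H/∂v (v,s) ds ) du dv = c_H² (H − 1/2)² B(2 − 2H, H − 1/2) ∫_0^T ∫_0^T φ(u) ψ(v) |u − v|^{2H − 2} du dv, where B denotes the Beta function. -/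
open MeasureTheory Set

lemma realBeta_integral {a b : ℝ} (ha : 0 < a) (hb : 0 < b) :
    ∫ t in (0:ℝ)..1, t ^ (a-1) * (1-t) ^ (b-1) = realBeta a b := by
  have h := Complex.Gamma_mul_Gamma_eq_betaIntegral (s := (a:ℂ)) (t := (b:ℂ))
    (by simpa using ha) (by simpa using hb)
  have hbeta : Complex.betaIntegral a b
      = ((∫ t in (0:ℝ)..1, t ^ (a-1) * (1-t) ^ (b-1) : ℝ) : ℂ) := by
    rw [Complex.betaIntegral, ← intervalIntegral.integral_ofReal]
    apply intervalIntegral.integral_congr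
    intro x hx
    have hx' : x ∈ Icc (0:ℝ) 1 := by
      rwa [uIcc_of_le (by norm_num : (0:ℝ) ≤ 1)] at hx
    show _ = (↑(x ^ (a - 1) * (1 - x) ^ (b - 1)) : ℂ)
    rw [Complex.ofReal_mul, Complex.ofReal_cpow hx'.1,
      Complex.ofReal_cpow (by linarith [hx'.2] : (0:ℝ) ≤ 1 - x)]
    push_cast
    ring
  rw [hbeta, ← Complex.ofReal_add, Complex.Gamma_ofReal, Complex.Gamma_ofReal,
    Complex.Gamma_ofReal, ← Complex.ofReal_mul, ← Complex.ofReal_mul] at h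
  have h' := Complex.ofReal_inj.mp h
  have hG : Real.Gamma (a+b) ≠ 0 := (Real.Gamma_pos_of_pos (by linarith)).ne'
  rw [realBeta, eq_div_iff hG]
  linarith [h']

lemma key_lt (H : ℝ) {u v : ℝ} (hu : 0 < u) (huv : u < v) :
    ∫ s in (0:ℝ)..u, fbmdK H u s * fbmdK H v s
      = cH H ^ 2 * (H - 1/2) ^ 2 *
        (∫ t in (0:ℝ)..1, t ^ (H - 3/2) * (1-t) ^ (1 - 2*H)) * (v-u) ^ (2*H-2) := by
  have hv : 0 < v := hu.trans huv
  have hvu : 0 < v - u := by linarith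
  set f : ℝ → ℝ := fun t => u*v*(1-t)/(v-u*t) with hf
  set f' : ℝ → ℝ := fun t => u*v*(u-v)/(v-u*t)^2 with hf'
  have hm : ∀ t : ℝ, t < 1 → 0 < v - u*t := by
    intro t ht
    nlinarith
  have hderiv : ∀ t ∈ Ioo (0:ℝ) 1, HasDerivWithinAt f (f' t) (Ioo (0:ℝ) 1) t := by
    intro t ht
    have hm0 : 0 < v - u*t := hm t ht.2
    have h1 : HasDerivAt (fun x : ℝ => u*v*(1-x)) (-(u*v)) t := by
      simpa using ((hasDerivAt_const t (1:ℝ)).sub (hasDerivAt_id t)).const_mul (u*v)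
    have h2 : HasDerivAt (fun x : ℝ => v - u*x) (-u) t := by
      simpa using ((hasDerivAt_id t).const_mul u).const_sub v
    have h3 := h1.div h2 hm0.ne'
    have : (-(u * v) * (v - u * t) - u * v * (1 - t) * -u) / (v - u * t) ^ 2 = f' t := by
      rw [hf']
      congr 1
      ring
    rw [this] at h3
    exact h3.hasDerivWithinAt
  have hinj : InjOn f (Ioo (0:ℝ) 1) := by
    intro t1 h1 t2 h2 heq
    have hm1 : 0 < v - u*t1 := hm t1 h1.2
    have hm2 : 0 < v - u*t2 := hm t2 h2.2
    rw [hf] at heq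
    simp only [div_eq_div_iff hm1.ne' hm2.ne'] at heq
    have h4 : u*v*(v-u)*(t2-t1) = 0 := by linear_combination heq
    have h5 : t2 - t1 = 0 := by
      rcases mul_eq_zero.mp h4 with h | h
      · exact absurd h (by positivity)
      · exact h
    linarith
  have himg : f '' Ioo (0:ℝ) 1 = Ioo 0 u := by
    ext s
    simp only [mem_image, mem_Ioo]
    constructor
    · rintro ⟨t, ⟨ht0, ht1⟩, rfl⟩
      have hm0 : 0 < v - u*t := hm t ht1
      constructor
      · rw [hf]
        exact div_pos (mul_pos (mul_pos hu hv) (by linarith)) hm0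
      · rw [hf, div_lt_iff₀ hm0]
        nlinarith [mul_pos (mul_pos hu ht0) hvu]
    · rintro ⟨hs0, hsu⟩
      have hvs : 0 < v - s := by linarith
      have hus : 0 < u - s := by linarith
      refine ⟨v*(u-s)/(u*(v-s)), ⟨by positivity, ?_⟩, ?_⟩
      · rw [div_lt_one (by positivity)]
        nlinarith
      · have hden : v - u * (v*(u-s)/(u*(v-s))) = v*(v-u)/(v-s) := by
          field_simp
          ring
        rw [hf]
        rw [div_eq_iff (by rw [hden]; positivity)]
        field_simp
        ring
  have hcongr : ∀ t ∈ Ioo (0:ℝ) 1,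
      |f' t| • (fbmdK H u (f t) * fbmdK H v (f t))
        = (cH H ^ 2 * (H-1/2)^2 * (v-u)^(2*H-2)) * (t ^ (H-3/2) * (1-t) ^ (1-2*H)) := by
    intro t ht
    obtain ⟨ht0, ht1⟩ := ht
    have h1t : (0:ℝ) < 1 - t := by linarith
    have hm0 : 0 < v - u*t := hm t ht1
    have habs : |f' t| = u*v*(v-u)/(v-u*t)^2 := by
      simp only [hf']
      rw [show u*v*(u-v)/(v-u*t)^2 = -(u*v*(v-u)/(v-u*t)^2) by ring, abs_neg,
        abs_of_pos (div_pos (mul_pos (mul_pos hu hv) hvu) (by positivity))]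
    have e1 : u - f t = u*t*(v-u)/(v-u*t) := by rw [hf]; field_simp; ring
    have e2 : v - f t = v*(v-u)/(v-u*t) := by rw [hf]; field_simp; ring
    have e3 : f t / u = v*(1-t)/(v-u*t) := by rw [hf]; field_simp
    have e4 : f t / v = u*(1-t)/(v-u*t) := by rw [hf]; field_simp
    rw [smul_eq_mul]
    simp only [fbmdK]
    rw [e1, e2, e3, e4, habs]
    have p1 : (0:ℝ) < u*t*(v-u)/(v-u*t) := div_pos (mul_pos (mul_pos hu ht0) hvu) hm0
    have p2 : (0:ℝ) < v*(1-t)/(v-u*t) := div_pos (mul_pos hv h1t) hm0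
    have p3 : (0:ℝ) < v*(v-u)/(v-u*t) := div_pos (mul_pos hv hvu) hm0
    have p4 : (0:ℝ) < u*(1-t)/(v-u*t) := div_pos (mul_pos hu h1t) hm0
    have p0 : (0:ℝ) < u*v*(v-u)/(v-u*t)^2 := div_pos (mul_pos (mul_pos hu hv) hvu) (by positivity)
    have q1 := Real.rpow_pos_of_pos p1 (H-3/2)
    have q2 := Real.rpow_pos_of_pos p2 (1/2-H)
    have q3 := Real.rpow_pos_of_pos p3 (H-3/2)
    have q4 := Real.rpow_pos_of_pos p4 (1/2-H)
    have r1 := Real.rpow_pos_of_pos hvu (2*H-2)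
    have r2 := Real.rpow_pos_of_pos ht0 (H-3/2)
    have r3 := Real.rpow_pos_of_pos h1t (1-2*H)
    have hP : (u*v*(v-u)/(v-u*t)^2) *
        ((u*t*(v-u)/(v-u*t)) ^ (H-3/2) * ((v*(1-t)/(v-u*t)) ^ (1/2-H) *
         ((v*(v-u)/(v-u*t)) ^ (H-3/2) * (u*(1-t)/(v-u*t)) ^ (1/2-H))))
        = (v-u)^(2*H-2) * (t ^ (H-3/2) * (1-t) ^ (1-2*H)) := by
      refine Real.log_injOn_pos (mem_Ioi.2 (by positivity)) (mem_Ioi.2 (by positivity)) ?_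
      rw [Real.log_mul p0.ne' (by positivity), Real.log_mul q1.ne' (by positivity),
        Real.log_mul q2.ne' (by positivity), Real.log_mul q3.ne' q4.ne',
        Real.log_mul r1.ne' (by positivity), Real.log_mul r2.ne' r3.ne',
        Real.log_rpow p1, Real.log_rpow p2, Real.log_rpow p3, Real.log_rpow p4,
        Real.log_rpow hvu, Real.log_rpow ht0, Real.log_rpow h1t,
        Real.log_div (by positivity) (by positivity),
        Real.log_div (by positivity) hm0.ne', Real.log_div (by positivity) hm0.ne',
        Real.log_div (by positivity) hm0.ne', Real.log_div (by positivity) hm0.ne',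
        Real.log_pow]
      rw [Real.log_mul (by positivity) hvu.ne', Real.log_mul hu.ne' hv.ne',
        Real.log_mul (by positivity) hvu.ne', Real.log_mul hu.ne' ht0.ne',
        Real.log_mul hv.ne' h1t.ne', Real.log_mul hv.ne' hvu.ne',
        Real.log_mul hu.ne' h1t.ne']
      ring
    linear_combination (cH H ^ 2 * (H - 1/2)^2) * hP
  calc ∫ s in (0:ℝ)..u, fbmdK H u s * fbmdK H v s
      = ∫ s in Ioo (0:ℝ) u, fbmdK H u s * fbmdK H v s := by
        rw [intervalIntegral.integral_of_le hu.le, integral_Ioc_eq_integral_Ioo]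
    _ = ∫ t in Ioo (0:ℝ) 1, |f' t| • (fbmdK H u (f t) * fbmdK H v (f t)) := by
        rw [← himg]
        exact integral_image_eq_integral_abs_deriv_smul measurableSet_Ioo hderiv hinj _
    _ = ∫ t in Ioo (0:ℝ) 1,
          (cH H ^ 2 * (H-1/2)^2 * (v-u)^(2*H-2)) * (t ^ (H-3/2) * (1-t) ^ (1-2*H)) :=
        setIntegral_congr_fun measurableSet_Ioo hcongr
    _ = (cH H ^ 2 * (H-1/2)^2 * (v-u)^(2*H-2)) *
          ∫ t in Ioo (0:ℝ) 1, t ^ (H-3/2) * (1-t) ^ (1-2*H) := integral_const_mul _ _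
    _ = cH H ^ 2 * (H - 1/2) ^ 2 *
        (∫ t in (0:ℝ)..1, t ^ (H - 3/2) * (1-t) ^ (1 - 2*H)) * (v-u) ^ (2*H-2) := by
        rw [← integral_Ioc_eq_integral_Ioo,
          ← intervalIntegral.integral_of_le (by norm_num : (0:ℝ) ≤ 1)]
        ring


lemma key_gen (H : ℝ) (hH : H ∈ Set.Ioo (1/2:ℝ) 1) {u v : ℝ} (hu : 0 < u) (hv : 0 < v)
    (hne : u ≠ v) :
    ∫ s in (0:ℝ)..(min u v), fbmdK H u s * fbmdK H v s
      = cH H ^ 2 * (H - 1/2) ^ 2 * realBeta (2 - 2*H) (H - 1/2) * |u-v| ^ (2*H-2) := by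
  have hbeta : ∫ t in (0:ℝ)..1, t ^ (H - 3/2) * (1-t) ^ (1 - 2*H)
      = realBeta (2-2*H) (H-1/2) := by
    have h := realBeta_integral (a := H - 1/2) (b := 2 - 2*H)
      (by linarith [hH.1]) (by linarith [hH.2])
    rw [show H - 1/2 - 1 = H - 3/2 by ring, show 2 - 2*H - 1 = 1 - 2*H by ring] at h
    rw [h, realBeta, realBeta, mul_comm (Real.Gamma (H-1/2)), add_comm]
  rcases hne.lt_or_gt with h | h
  · rw [min_eq_left h.le, key_lt H hu h, hbeta, abs_of_neg (by linarith : u - v < 0), neg_sub]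
  · have hc : (∫ s in (0:ℝ)..v, fbmdK H u s * fbmdK H v s)
        = ∫ s in (0:ℝ)..v, fbmdK H v s * fbmdK H u s :=
      intervalIntegral.integral_congr (fun s _ => mul_comm _ _)
    rw [min_eq_right h.le, hc, key_lt H hv h, hbeta, abs_of_pos (by linarith : 0 < u - v)]

/-- For `H ∈ (1/2,1)`, `T > 0` and continuous `φ, ψ` on `[0,T]`,
`∫_0^T ∫_0^T φ(u)ψ(v) (∫_0^{u∧v} ∂K^H/∂u(u,s) ∂K^H/∂v(v,s) ds) du dv
 = c_H² (H-1/2)² B(2-2H, H-1/2) ∫_0^T ∫_0^T φ(u)ψ(v)|u-v|^{2H-2} du dv`. -/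
theorem stmt_13 (H : ℝ) (hH : H ∈ Set.Ioo (1/2 : ℝ) 1) (T : ℝ) (hT : 0 < T)
    (φ ψ : ℝ → ℝ) (hφ : ContinuousOn φ (Set.Icc 0 T)) (hψ : ContinuousOn ψ (Set.Icc 0 T)) :
    (∫ u in (0:ℝ)..T, ∫ v in (0:ℝ)..T,
        φ u * ψ v * ∫ s in (0:ℝ)..(min u v), fbmdK H u s * fbmdK H v s) =
      cH H ^ 2 * (H - 1/2) ^ 2 * realBeta (2 - 2*H) (H - 1/2) *
        ∫ u in (0:ℝ)..T, ∫ v in (0:ℝ)..T, φ u * ψ v * |u - v| ^ (2*H - 2) := by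
  set C := cH H ^ 2 * (H - 1/2) ^ 2 * realBeta (2 - 2*H) (H - 1/2) with hC
  have hstep : (∫ u in (0:ℝ)..T, ∫ v in (0:ℝ)..T,
        φ u * ψ v * ∫ s in (0:ℝ)..(min u v), fbmdK H u s * fbmdK H v s)
      = ∫ u in (0:ℝ)..T, ∫ v in (0:ℝ)..T, φ u * ψ v * (C * |u - v| ^ (2*H - 2)) := by
    apply intervalIntegral.integral_congr_ae
    refine Filter.Eventually.of_forall ?_
    intro u hu
    rw [uIoc_of_le hT.le] at hu
    apply intervalIntegral.integral_congr_ae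
    have hae : ∀ᵐ (x : ℝ), x ≠ u := by
      refine mem_ae_iff.mpr ?_
      rw [show {x : ℝ | x ≠ u}ᶜ = {u} by ext x; simp]
      exact measure_singleton u
    filter_upwards [hae] with v hvne hv
    rw [uIoc_of_le hT.le] at hv
    rw [key_gen H hH hu.1 hv.1 (Ne.symm hvne), hC]
  rw [hstep]
  have hpull : ∀ u : ℝ, (∫ v in (0:ℝ)..T, φ u * ψ v * (C * |u - v| ^ (2*H - 2)))
      = C * ∫ v in (0:ℝ)..T, φ u * ψ v * |u - v| ^ (2*H - 2) := by
    intro u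
    rw [← intervalIntegral.integral_const_mul]
    apply intervalIntegral.integral_congr
    intro v _
    ring
  simp_rw [hpull]
  rw [intervalIntegral.integral_const_mul]
end
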